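/- arXiv:2403.11477 — 2 statements merged into one kernel-verified Lean document; each statement's English description precedes it below -/
import Mathlib

section
/- For any finite MDP (P,r), any discount γ ∈ (0,1), any integer T ≥ 1, and any deterministic stationary policy π, the vector identity 𝕍^π[Σ_{t=0}^∞ γ^t R_t] = 𝕍^π[Σ_{t=0}^{T−1} γ^t R_t + γ^T V_γ^π(S_T)] + γ^{2T}·P_π^T·𝕍^π[Σ_{t=0}^∞ γ^t R_t] holds; consequently ||𝕍^π[Σ_{t=0}^∞ γ^t R_t]||_∞ ≤ ||𝕍^π[Σ_{t=0}^{T−1} γ^t R_t + γ^T V_γ^π(S_T)]||_∞ / (1 − γ^{2T}). -/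
open Filter Matrix MeasureTheory
open scoped BigOperators ENNReal

namespace PaperMDP

variable {S A : Type*}

section Core

variable [Fintype S] [Fintype A] [DecidableEq S] [Nonempty S] [Nonempty A]

/-- `p` is a transition probability kernel on `S × A`. -/
def IsKernel (p : S → A → S → ℝ) : Prop :=
  ∀ s a, (∀ s', 0 ≤ p s a s') ∧ (∑ s', p s a s') = 1

/-- `pol` is a stationary Markov (randomized) policy. -/
def IsPolicy (pol : S → A → ℝ) : Prop :=
  ∀ s, (∀ a, 0 ≤ pol s a) ∧ (∑ a, pol s a) = 1

/-- Transition matrix `P_π` induced by a policy. -/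
def polMat (p : S → A → S → ℝ) (pol : S → A → ℝ) : Matrix S S ℝ :=
  Matrix.of fun s s' => ∑ a, pol s a * p s a s'

/-- Reward vector `r_π` induced by a policy. -/
def polRew (r : S → A → ℝ) (pol : S → A → ℝ) : S → ℝ := fun s => ∑ a, pol s a * r s a

/-- The deterministic policy induced by `d : S → A`, viewed as a randomized policy. -/
def detPol [DecidableEq A] (d : S → A) : S → A → ℝ := fun s a => if a = d s then 1 else 0

/-- `(I - γ M)⁻¹ v = ∑_{t ≥ 0} γ^t M^t v` (Neumann series). -/
noncomputable def resApply (γ : ℝ) (M : Matrix S S ℝ) (v : S → ℝ) : S → ℝ :=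
  ∑' t : ℕ, γ ^ t • (M ^ t *ᵥ v)

/-- Discounted value function `V_γ^π`. -/
noncomputable def dval (p : S → A → S → ℝ) (r : S → A → ℝ) (γ : ℝ) (pol : S → A → ℝ) :
    S → ℝ :=
  resApply γ (polMat p pol) (polRew r pol)

/-- Optimal discounted value function `V_γ^*`. -/
noncomputable def dvalStar (p : S → A → S → ℝ) (r : S → A → ℝ) (γ : ℝ) : S → ℝ := fun s =>
  ⨆ q : {q : S → A → ℝ // IsPolicy q}, dval p r γ q.1 s

/-- `pol` is an optimal policy for the `γ`-discounted MDP `(p, r, γ)`. -/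
def DiscountedOptimal (p : S → A → S → ℝ) (r : S → A → ℝ) (γ : ℝ) (pol : S → A → ℝ) :
    Prop :=
  IsPolicy pol ∧ ∀ q : S → A → ℝ, IsPolicy q → ∀ s, dval p r γ q s ≤ dval p r γ pol s

/-- Cesàro limit of a sequence of vectors. -/
noncomputable def cesaro (f : ℕ → S → ℝ) : S → ℝ :=
  limUnder atTop fun N : ℕ => (N : ℝ)⁻¹ • ∑ T ∈ Finset.range N, f T

/-- The gain (long-run average reward) `ρ^π`. -/
noncomputable def gain (p : S → A → S → ℝ) (r : S → A → ℝ) (pol : S → A → ℝ) : S → ℝ :=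
  cesaro fun t => (polMat p pol ^ t) *ᵥ polRew r pol

/-- The bias function `h^π`. -/
noncomputable def bias (p : S → A → S → ℝ) (r : S → A → ℝ) (pol : S → A → ℝ) : S → ℝ :=
  cesaro fun T => ∑ t ∈ Finset.range T, ((polMat p pol ^ t) *ᵥ polRew r pol - gain p r pol)

/-- Blackwell optimality of a policy. -/
def Blackwell (p : S → A → S → ℝ) (r : S → A → ℝ) (pol : S → A → ℝ) : Prop :=
  IsPolicy pol ∧ ∃ γ₀ ∈ Set.Ioo (0 : ℝ) 1, ∀ γ ∈ Set.Ico γ₀ 1,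
    ∀ q : S → A → ℝ, IsPolicy q → ∀ s, dval p r γ q s ≤ dval p r γ pol s

/-- The optimal gain `ρ^*(s) = sup_π ρ^π(s)`. -/
noncomputable def gainStar (p : S → A → S → ℝ) (r : S → A → ℝ) : S → ℝ := fun s =>
  ⨆ q : {q : S → A → ℝ // IsPolicy q}, gain p r q.1 s

/-- Span seminorm `sp(v) = max v - min v`. -/
noncomputable def span (v : S → ℝ) : ℝ := (⨆ s, v s) - (⨅ s, v s)

/-- `s'` is reachable from `s` in the Markov chain with transition matrix `M`. -/
def Reaches (M : Matrix S S ℝ) (s s' : S) : Prop := ∃ t : ℕ, 0 < (M ^ t) s s'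

/-- A state of a finite Markov chain is recurrent iff its communicating class is closed. -/
def Recurrent (M : Matrix S S ℝ) (s : S) : Prop := ∀ s', Reaches M s s' → Reaches M s' s

/-- Weakly communicating MDP. -/
def WeaklyCommunicating (p : S → A → S → ℝ) : Prop :=
  ∃ S1 : Set S,
    (∀ s ∈ S1, ∀ pol : S → A → ℝ, IsPolicy pol → ¬Recurrent (polMat p pol) s) ∧
    ∀ s ∉ S1, ∀ s' ∉ S1, ∃ pol : S → A → ℝ, IsPolicy pol ∧ Reaches (polMat p pol) s s'

/-- The probability that the chain `M` started at `s` is in a transient state at time `t`.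
For a finite chain, `E_s[T_{R}] = ∑_{t} transientMass M s t`, since the set of recurrent
states is closed. -/
noncomputable def transientMass (M : Matrix S S ℝ) (s : S) (t : ℕ) : ℝ :=
  ∑ s', Set.indicator {x : S | ¬Recurrent M x} (fun x => (M ^ t) s x) s'

/-- The bounded transient time property with parameter `B`:
`E_s^π[T_{R^π}] ≤ B` for every deterministic stationary policy and every state. -/
def BoundedTransientTime [DecidableEq A] (p : S → A → S → ℝ) (B : ℝ) : Prop :=
  ∀ (d : S → A) (s : S) (n : ℕ),
    (∑ t ∈ Finset.range n, transientMass (polMat p (detPol d)) s t) ≤ B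

/-- One-step variance vector `𝕍_{P}[V]`. -/
noncomputable def oneStepVar (M : Matrix S S ℝ) (V : S → ℝ) : S → ℝ := fun s =>
  ∑ s', M s s' * (V s' - (M *ᵥ V) s) ^ 2

/-- Probability of the path `(S_0, …, S_T) = path` for the chain `M` started at `s`. -/
noncomputable def pathProb (M : Matrix S S ℝ) (s : S) {T : ℕ} (path : Fin (T + 1) → S) : ℝ :=
  (if path 0 = s then 1 else 0) * ∏ i : Fin T, M (path i.castSucc) (path i.succ)

/-- Expectation of a function of `(S_0, …, S_T)` for the chain `M` started at `s`. -/
noncomputable def pathExp (M : Matrix S S ℝ) (s : S) (T : ℕ) (f : (Fin (T + 1) → S) → ℝ) :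
    ℝ :=
  ∑ path : Fin (T + 1) → S, pathProb M s path * f path

/-- Variance of a function of `(S_0, …, S_T)` for the chain `M` started at `s`. -/
noncomputable def pathVar (M : Matrix S S ℝ) (s : S) (T : ℕ) (f : (Fin (T + 1) → S) → ℝ) :
    ℝ :=
  pathExp M s T fun path => (f path - pathExp M s T f) ^ 2

/-- Variance of the infinite-horizon discounted return, `𝕍_s^π[∑_{t} γ^t R_t]`,
as the limit of the variances of the truncated returns. -/
noncomputable def returnVar (M : Matrix S S ℝ) (rv : S → ℝ) (γ : ℝ) : S → ℝ := fun s =>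
  limUnder atTop fun T : ℕ =>
    pathVar M s T fun path => ∑ t : Fin (T + 1), γ ^ (t : ℕ) * rv (path t)

end Core

set_option linter.unusedSectionVars false
section Aux2
variable {S : Type*} [Fintype S] [DecidableEq S] (M : Matrix S S ℝ)

lemma pathExp_zero (s : S) (f : (Fin 1 → S) → ℝ) :
    pathExp M s 0 f = f (fun _ => s) := by
  rw [pathExp]
  rw [Fintype.sum_equiv (Equiv.funUnique (Fin 1) S)
    (fun path => pathProb M s path * f path)
    (fun x : S => (if x = s then 1 else 0) * f (fun _ => x))]
  · simp
  · intro path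
    simp only [pathProb, Equiv.funUnique_apply, Finset.univ_eq_empty, Finset.prod_empty, mul_one]
    congr 2
    ext i
    exact congrArg _ (Subsingleton.elim _ _)

lemma pathProb_snoc (s : S) (N : ℕ) (q : Fin (N+1) → S) (s' : S) :
    pathProb M s (Fin.snoc q s' : Fin (N+2) → S) = pathProb M s q * M (q (Fin.last N)) s' := by
  rw [pathProb, pathProb, Fin.prod_univ_castSucc]
  have h0 : (Fin.snoc q s' : Fin (N+2) → S) 0 = q 0 := by
    have : (0 : Fin (N+2)) = (0 : Fin (N+1)).castSucc := rfl
    rw [this, Fin.snoc_castSucc]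
  have h1 : ∀ j : Fin N, (Fin.snoc q s' : Fin (N+2) → S) (j.castSucc.castSucc) = q j.castSucc := fun j => Fin.snoc_castSucc _ _ _
  have h2 : ∀ j : Fin N, (Fin.snoc q s' : Fin (N+2) → S) (j.castSucc.succ) = q j.succ := by
    intro j
    rw [Fin.succ_castSucc, Fin.snoc_castSucc]
  have h3 : (Fin.snoc q s' : Fin (N+2) → S) ((Fin.last N).castSucc) = q (Fin.last N) := Fin.snoc_castSucc _ _ _
  have h4 : (Fin.snoc q s' : Fin (N+2) → S) ((Fin.last N).succ) = s' := by
    rw [Fin.succ_last]; exact Fin.snoc_last _ _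
  rw [h0, h3, h4]
  rw [Finset.prod_congr rfl (fun j _ => by rw [h1 j, h2 j])]
  ring

lemma pathExp_succ (s : S) (N : ℕ) (f : (Fin (N+2) → S) → ℝ) :
    pathExp M s (N+1) f
      = pathExp M s N (fun q => ∑ s', M (q (Fin.last N)) s' * f (Fin.snoc q s')) := by
  rw [pathExp, pathExp]
  rw [← Fintype.sum_equiv (Fin.snocEquiv (fun _ : Fin (N+2) => S))
    (fun x : S × (Fin (N+1) → S) => pathProb M s (Fin.snoc x.2 x.1) * f (Fin.snoc x.2 x.1))
    (fun path => pathProb M s path * f path)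
    (fun x => by simp [Fin.snocEquiv])]
  rw [Fintype.sum_prod_type]
  rw [Finset.sum_comm]
  apply Finset.sum_congr rfl
  intro q _
  rw [Finset.mul_sum]
  apply Finset.sum_congr rfl
  intro s' _
  rw [pathProb_snoc]
  ring


lemma row_sum_pow (hM1 : ∀ s, ∑ s', M s s' = 1) (N : ℕ) (s : S) :
    ∑ s', (M ^ N) s s' = 1 := by
  induction N generalizing s with
  | zero => simp [Matrix.one_apply, Finset.sum_ite_eq']
  | succ n ih =>
    rw [pow_succ']
    simp only [Matrix.mul_apply]
    rw [Finset.sum_comm]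
    calc ∑ x, ∑ s', M s x * (M ^ n) x s' = ∑ x, M s x * ∑ s', (M ^ n) x s' := by
          simp [Finset.mul_sum]
      _ = 1 := by simp only [ih]; simpa using hM1 s

lemma entry_nonneg_pow (hM0 : ∀ s s', 0 ≤ M s s') (N : ℕ) (s s' : S) :
    0 ≤ (M ^ N) s s' := by
  induction N generalizing s s' with
  | zero => rw [pow_zero, Matrix.one_apply]; split <;> norm_num
  | succ n ih =>
    rw [pow_succ', Matrix.mul_apply]
    exact Finset.sum_nonneg fun x _ => mul_nonneg (hM0 s x) (ih x s')

lemma pathExp_last (s : S) (N : ℕ) (g : S → ℝ) :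
    pathExp M s N (fun q => g (q (Fin.last N))) = (M ^ N *ᵥ g) s := by
  induction N generalizing s g with
  | zero => rw [pathExp_zero]; simp
  | succ n ih =>
    rw [pathExp_succ]
    have : (fun q : Fin (n+1) → S => ∑ s', M (q (Fin.last n)) s' * g ((Fin.snoc q s' : Fin (n+2) → S) (Fin.last (n+1))))
        = fun q => (M *ᵥ g) (q (Fin.last n)) := by
      funext q
      simp [Matrix.mulVec, dotProduct]
    rw [this, ih s (M *ᵥ g), Matrix.mulVec_mulVec, ← pow_succ]

lemma pathExp_add (s : S) (N : ℕ) (f g : (Fin (N+1) → S) → ℝ) :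
    pathExp M s N (fun q => f q + g q) = pathExp M s N f + pathExp M s N g := by
  simp [pathExp, mul_add, Finset.sum_add_distrib]

lemma pathExp_mul_const (s : S) (N : ℕ) (c : ℝ) (f : (Fin (N+1) → S) → ℝ) :
    pathExp M s N (fun q => c * f q) = c * pathExp M s N f := by
  simp [pathExp, Finset.mul_sum]; apply Finset.sum_congr rfl; intros; ring

lemma pathExp_one (hM1 : ∀ s, ∑ s', M s s' = 1) (s : S) (N : ℕ) :
    pathExp M s N (fun _ => 1) = 1 := by
  have := pathExp_last M s N (fun _ => 1)
  rw [this, Matrix.mulVec, dotProduct]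
  simp [row_sum_pow M hM1 N s]

lemma pathExp_congr (s : S) (N : ℕ) (f g : (Fin (N+1) → S) → ℝ) (h : ∀ q, f q = g q) :
    pathExp M s N f = pathExp M s N g := by
  simp only [pathExp]; exact Finset.sum_congr rfl fun q _ => by rw [h q]

lemma pathProb_nonneg (hM0 : ∀ s s', 0 ≤ M s s') (s : S) {T : ℕ} (path : Fin (T+1) → S) :
    0 ≤ pathProb M s path := by
  apply mul_nonneg
  · split <;> norm_num
  · exact Finset.prod_nonneg fun i _ => hM0 _ _

lemma pathExp_abs_le (hM0 : ∀ s s', 0 ≤ M s s') (hM1 : ∀ s, ∑ s', M s s' = 1)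
    (s : S) (N : ℕ) (f : (Fin (N+1) → S) → ℝ) (c : ℝ) (hf : ∀ q, |f q| ≤ c) :
    |pathExp M s N f| ≤ c := by
  calc |pathExp M s N f| ≤ ∑ q : Fin (N+1) → S, |pathProb M s q * f q| :=
        Finset.abs_sum_le_sum_abs _ _
    _ ≤ ∑ q : Fin (N+1) → S, pathProb M s q * c := by
        apply Finset.sum_le_sum
        intro q _
        rw [abs_mul, abs_of_nonneg (pathProb_nonneg M hM0 s q)]
        exact mul_le_mul_of_nonneg_left (hf q) (pathProb_nonneg M hM0 s q)
    _ = pathExp M s N (fun _ => 1) * c := by rw [pathExp]; rw [Finset.sum_mul]; simp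
    _ = c := by rw [pathExp_one M hM1]; ring


noncomputable def Yfun (γ : ℝ) (rv v : S → ℝ) (N : ℕ) (q : Fin (N+1) → S) : ℝ :=
  (∑ i : Fin N, γ^(i:ℕ) * rv (q i.castSucc)) + γ^N * v (q (Fin.last N))

variable {γ : ℝ} {rv v : S → ℝ}

lemma Y_snoc (hbell : ∀ x, rv x = v x - γ * (M *ᵥ v) x) (N : ℕ) (q : Fin (N+1) → S) (s' : S) :
    Yfun γ rv v (N+1) (Fin.snoc q s') =
      Yfun γ rv v N q + γ^(N+1) * (v s' - (M *ᵥ v) (q (Fin.last N))) := by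
  rw [Yfun, Yfun]
  have hs : ∀ i : Fin (N+1), (Fin.snoc q s' : Fin (N+2) → S) i.castSucc = q i :=
    fun i => Fin.snoc_castSucc _ _ _
  have hl : (Fin.snoc q s' : Fin (N+2) → S) (Fin.last (N+1)) = s' := Fin.snoc_last _ _
  rw [hl, Finset.sum_congr rfl (fun i _ => by rw [hs i])]
  rw [Fin.sum_univ_castSucc (f := fun i : Fin (N+1) => γ^(i:ℕ) * rv (q i))]
  simp only [Fin.coe_castSucc, Fin.val_last]
  rw [hbell (q (Fin.last N))]
  ring

variable (γ rv v) in
lemma expY (hM1 : ∀ s, ∑ s', M s s' = 1)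
    (hbell : ∀ x, rv x = v x - γ * (M *ᵥ v) x) (N : ℕ) (s : S) :
    pathExp M s N (Yfun γ rv v N) = v s := by
  induction N generalizing s with
  | zero => rw [pathExp_zero, Yfun]; simp
  | succ n ih =>
    rw [pathExp_succ]
    rw [pathExp_congr M s n _ (Yfun γ rv v n) ?_]
    · exact ih s
    intro q
    simp only [Y_snoc M hbell n q]
    have hmv : ∑ x, M (q (Fin.last n)) x * v x = (M *ᵥ v) (q (Fin.last n)) := by
      simp [Matrix.mulVec, dotProduct]
    calc ∑ x, M (q (Fin.last n)) x *
          (Yfun γ rv v n q + γ ^ (n + 1) * (v x - (M *ᵥ v) (q (Fin.last n))))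
        = (∑ x, M (q (Fin.last n)) x) * (Yfun γ rv v n q
            - γ ^ (n+1) * (M *ᵥ v) (q (Fin.last n)))
          + γ ^ (n+1) * ∑ x, M (q (Fin.last n)) x * v x := by
          rw [Finset.sum_mul, Finset.mul_sum, ← Finset.sum_add_distrib]
          exact Finset.sum_congr rfl fun x _ => by ring
      _ = Yfun γ rv v n q := by rw [hM1, hmv]; ring

variable (γ rv v) in
lemma varY (hM1 : ∀ s, ∑ s', M s s' = 1)
    (hbell : ∀ x, rv x = v x - γ * (M *ᵥ v) x) (N : ℕ) (s : S) :
    pathExp M s N (fun q => (Yfun γ rv v N q - v s)^2)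
      = ∑ k ∈ Finset.range N, γ^(2*(k+1)) * ((M^k) *ᵥ (oneStepVar M v)) s := by
  induction N generalizing s with
  | zero => rw [pathExp_zero, Yfun]; simp
  | succ n ih =>
    rw [pathExp_succ, Finset.sum_range_succ, ← ih s]
    rw [pathExp_congr M s n _
      (fun q => (Yfun γ rv v n q - v s)^2
        + γ^(2*(n+1)) * oneStepVar M v (q (Fin.last n))) ?_]
    · rw [pathExp_add, pathExp_mul_const, pathExp_last]
    · intro q
      set y := q (Fin.last n) with hy
      set A := Yfun γ rv v n q - v s with hA
      set w := (M *ᵥ v) y with hw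
      have key : ∀ x, M y x * (Yfun γ rv v (n+1) (Fin.snoc q x) - v s)^2
          = M y x * A^2 + (2*A*γ^(n+1)) * (M y x * v x - M y x * w)
            + γ^(2*(n+1)) * (M y x * (v x - w)^2) := by
        intro x
        rw [Y_snoc M hbell n q x]
        have h2 : γ^(2*(n+1)) = γ^(n+1) * γ^(n+1) := by rw [two_mul, pow_add]
        rw [h2, hA]
        ring
      rw [Finset.sum_congr rfl (fun x _ => key x)]
      rw [Finset.sum_add_distrib, Finset.sum_add_distrib]
      have hmv : ∑ x, M y x * v x = w := by simp [hw, Matrix.mulVec, dotProduct]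
      rw [← Finset.sum_mul, ← Finset.mul_sum, ← Finset.mul_sum,
        Finset.sum_sub_distrib, hmv, ← Finset.sum_mul, hM1]
      have hosv : ∑ x, M y x * (v x - w)^2 = oneStepVar M v y := rfl
      rw [hosv]
      ring


lemma pathVar_eq (hM1 : ∀ s, ∑ s', M s s' = 1) (s : S) (N : ℕ) (f : (Fin (N+1) → S) → ℝ) :
    pathVar M s N f = pathExp M s N (fun q => (f q)^2) - (pathExp M s N f)^2 := by
  rw [pathVar]
  set E := pathExp M s N f with hE
  rw [pathExp_congr M s N _
    (fun q => (f q)^2 + ((-(2*E)) * f q + E^2 * (fun _ : Fin (N+1) → S => (1:ℝ)) q))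
    (fun q => by simp only; ring)]
  rw [pathExp_add, pathExp_add, pathExp_mul_const, pathExp_mul_const, pathExp_one M hM1]
  ring

lemma abs_sq_sub_sq (a b C δ : ℝ) (ha : |a| ≤ C) (hb : |b| ≤ C) (hab : |a - b| ≤ δ) :
    |a^2 - b^2| ≤ 2*C*δ := by
  have h : a^2 - b^2 = (a - b) * (a + b) := by ring
  rw [h, abs_mul]
  have : |a + b| ≤ 2*C := by
    calc |a + b| ≤ |a| + |b| := abs_add_le _ _
      _ ≤ 2*C := by linarith
  calc |a - b| * |a + b| ≤ δ * (2*C) := by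
        apply mul_le_mul hab this (abs_nonneg _) (le_trans (abs_nonneg _) hab)
    _ = 2*C*δ := by ring

lemma pathVar_sub_le (hM0 : ∀ s s', 0 ≤ M s s') (hM1 : ∀ s, ∑ s', M s s' = 1)
    (s : S) (N : ℕ) (f g : (Fin (N+1) → S) → ℝ) (C δ : ℝ)
    (hf : ∀ q, |f q| ≤ C) (hg : ∀ q, |g q| ≤ C) (hfg : ∀ q, |f q - g q| ≤ δ) :
    |pathVar M s N f - pathVar M s N g| ≤ 4*C*δ := by
  rw [pathVar_eq M hM1, pathVar_eq M hM1]
  have hC : 0 ≤ C := le_trans (abs_nonneg _) (hf (fun _ => s))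
  have h1 : |pathExp M s N (fun q => (f q)^2) - pathExp M s N (fun q => (g q)^2)| ≤ 2*C*δ := by
    have := pathExp_add M s N (fun q => (f q)^2 - (g q)^2) (fun q => (g q)^2)
    simp only [sub_add_cancel] at this
    rw [this, add_sub_cancel_right]
    exact pathExp_abs_le M hM0 hM1 s N _ _
      (fun q => abs_sq_sub_sq (f q) (g q) C δ (hf q) (hg q) (hfg q))
  have h2 : |(pathExp M s N f)^2 - (pathExp M s N g)^2| ≤ 2*C*δ := by
    apply abs_sq_sub_sq _ _ C δ
    · exact pathExp_abs_le M hM0 hM1 s N f C hf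
    · exact pathExp_abs_le M hM0 hM1 s N g C hg
    · have := pathExp_add M s N (fun q => f q - g q) g
      simp only [sub_add_cancel] at this
      rw [this, add_sub_cancel_right]
      exact pathExp_abs_le M hM0 hM1 s N _ δ hfg
  calc |pathExp M s N (fun q => (f q)^2) - (pathExp M s N f)^2
        - (pathExp M s N (fun q => (g q)^2) - (pathExp M s N g)^2)|
      ≤ |pathExp M s N (fun q => (f q)^2) - pathExp M s N (fun q => (g q)^2)|
        + |(pathExp M s N f)^2 - (pathExp M s N g)^2| := by
        have e : ∀ a b c d : ℝ, a - b - (c - d) = (a - c) - (b - d) := by intros; ring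
        rw [e]
        exact abs_sub _ _
    _ ≤ 4*C*δ := by linarith

lemma pathVar_Y (hM1 : ∀ s, ∑ s', M s s' = 1)
    (hbell : ∀ x, rv x = v x - γ * (M *ᵥ v) x) (N : ℕ) (s : S) :
    pathVar M s N (Yfun γ rv v N)
      = ∑ k ∈ Finset.range N, γ^(2*(k+1)) * ((M^k) *ᵥ (oneStepVar M v)) s := by
  rw [pathVar, expY M γ rv v hM1 hbell N s, varY M γ rv v hM1 hbell N s]

lemma mulVec_abs_le (hM0 : ∀ s s', 0 ≤ M s s') (hM1 : ∀ s, ∑ s', M s s' = 1)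
    (x : S → ℝ) (c : ℝ) (hx : ∀ s', |x s'| ≤ c) (s : S) : |(M *ᵥ x) s| ≤ c := by
  rw [Matrix.mulVec, dotProduct]
  calc |∑ s', M s s' * x s'| ≤ ∑ s', |M s s' * x s'| := Finset.abs_sum_le_sum_abs _ _
    _ ≤ ∑ s', M s s' * c := by
        apply Finset.sum_le_sum
        intro s' _
        rw [abs_mul, abs_of_nonneg (hM0 s s')]
        exact mul_le_mul_of_nonneg_left (hx s') (hM0 s s')
    _ = c := by rw [← Finset.sum_mul, hM1, one_mul]

lemma pow_mulVec_abs_le (hM0 : ∀ s s', 0 ≤ M s s') (hM1 : ∀ s, ∑ s', M s s' = 1)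
    (N : ℕ) (x : S → ℝ) (c : ℝ) (hx : ∀ s', |x s'| ≤ c) (s : S) : |((M^N) *ᵥ x) s| ≤ c :=
  mulVec_abs_le (M^N) (entry_nonneg_pow M hM0 N) (row_sum_pow M hM1 N) x c hx s


lemma res_summable (hM0 : ∀ s s', 0 ≤ M s s') (hM1 : ∀ s, ∑ s', M s s' = 1)
    (hγ0 : 0 ≤ γ) (hγ1 : γ < 1) (c : ℝ) (hc : 0 ≤ c) (hrv : ∀ s, |rv s| ≤ c) :
    Summable (fun t : ℕ => γ^t • ((M^t) *ᵥ rv)) := by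
  apply Summable.of_norm
  apply Summable.of_nonneg_of_le (fun t => norm_nonneg _) (fun t => ?_)
    ((summable_geometric_of_lt_one hγ0 hγ1).mul_right c)
  rw [norm_smul, Real.norm_eq_abs, abs_of_nonneg (pow_nonneg hγ0 t)]
  apply mul_le_mul_of_nonneg_left _ (pow_nonneg hγ0 t)
  rw [pi_norm_le_iff_of_nonneg hc]
  intro s
  rw [Real.norm_eq_abs]
  exact pow_mulVec_abs_le M hM0 hM1 t rv c hrv s

lemma resApply_bellman (hM0 : ∀ s s', 0 ≤ M s s') (hM1 : ∀ s, ∑ s', M s s' = 1)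
    (hγ0 : 0 ≤ γ) (hγ1 : γ < 1) (c : ℝ) (hc : 0 ≤ c) (hrv : ∀ s, |rv s| ≤ c) :
    resApply γ M rv = rv + γ • (M *ᵥ resApply γ M rv) := by
  have hs := res_summable (γ := γ) (rv := rv) M hM0 hM1 hγ0 hγ1 c hc hrv
  set L : (S → ℝ) →L[ℝ] (S → ℝ) := LinearMap.toContinuousLinearMap (γ • M.mulVecLin) with hL
  have hLx : ∀ x : S → ℝ, L x = γ • (M *ᵥ x) := by
    intro x
    rw [hL, LinearMap.coe_toContinuousLinearMap']
    simp [Matrix.mulVecLin_apply]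
  have key : resApply γ M rv = (γ^0 • ((M^0) *ᵥ rv)) + ∑' t : ℕ, γ^(t+1) • ((M^(t+1)) *ᵥ rv) := by
    rw [resApply]
    exact hs.tsum_eq_zero_add
  conv_lhs => rw [key]
  congr 1
  · simp
  have hft : ∀ t : ℕ, γ^(t+1) • ((M^(t+1)) *ᵥ rv) = L (γ^t • ((M^t) *ᵥ rv)) := by
    intro t
    rw [hLx, Matrix.mulVec_smul, smul_smul, ← pow_succ', Matrix.mulVec_mulVec, ← pow_succ']
  rw [tsum_congr hft, ← L.map_tsum hs, hLx]
  rfl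

lemma resApply_abs_le (hM0 : ∀ s s', 0 ≤ M s s') (hM1 : ∀ s, ∑ s', M s s' = 1)
    (hγ0 : 0 ≤ γ) (hγ1 : γ < 1) (c : ℝ) (hc : 0 ≤ c) (hrv : ∀ s, |rv s| ≤ c) (s : S) :
    |resApply γ M rv s| ≤ c / (1 - γ) := by
  have hs := res_summable (γ := γ) (rv := rv) M hM0 hM1 hγ0 hγ1 c hc hrv
  have happ : resApply γ M rv s = ∑' t : ℕ, (γ^t • ((M^t) *ᵥ rv)) s := tsum_apply hs
  rw [happ]
  have hb : ∀ t : ℕ, ‖(γ^t • ((M^t) *ᵥ rv)) s‖ ≤ γ^t * c := by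
    intro t
    rw [Pi.smul_apply, smul_eq_mul, Real.norm_eq_abs, abs_mul,
      abs_of_nonneg (pow_nonneg hγ0 t)]
    exact mul_le_mul_of_nonneg_left (pow_mulVec_abs_le M hM0 hM1 t rv c hrv s) (pow_nonneg hγ0 t)
  have hsum : Summable (fun t : ℕ => ‖(γ^t • ((M^t) *ᵥ rv)) s‖) := by
    apply Summable.of_nonneg_of_le (fun t => norm_nonneg _) hb
    exact (summable_geometric_of_lt_one hγ0 hγ1).mul_right c
  rw [← Real.norm_eq_abs]
  calc ‖∑' t : ℕ, (γ^t • ((M^t) *ᵥ rv)) s‖ ≤ ∑' t : ℕ, ‖(γ^t • ((M^t) *ᵥ rv)) s‖ :=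
        norm_tsum_le_tsum_norm hsum
    _ ≤ ∑' t : ℕ, γ^t * c := Summable.tsum_le_tsum hb hsum ((summable_geometric_of_lt_one hγ0 hγ1).mul_right c)
    _ = (1-γ)⁻¹ * c := by rw [tsum_mul_right, tsum_geometric_of_lt_one hγ0 hγ1]
    _ = c / (1-γ) := by ring

end Aux2


/-- The multistep variance Bellman equation: for any finite MDP, discount
`γ ∈ (0,1)`, integer `T ≥ 1` and deterministic stationary policy, writing `W` for the
vector of variances of `∑_{t<T} γ^t R_t + γ^T V_γ^π(S_T)`,
`𝕍^π[∑_t γ^t R_t] = W + γ^{2T} P_π^T 𝕍^π[∑_t γ^t R_t]`, and consequently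
`‖𝕍^π[∑_t γ^t R_t]‖_∞ ≤ ‖W‖_∞ / (1 - γ^{2T})`. -/
theorem stmt8 {S A : Type*} [Fintype S] [Fintype A] [DecidableEq S] [DecidableEq A]
    [Nonempty S] [Nonempty A]
    (p : S → A → S → ℝ) (hp : IsKernel p)
    (r : S → A → ℝ) (hr : ∀ s a, r s a ∈ Set.Icc (0 : ℝ) 1)
    (γ : ℝ) (hγ : γ ∈ Set.Ioo (0 : ℝ) 1)
    (T : ℕ) (hT : 1 ≤ T)
    (d : S → A)
    (M : Matrix S S ℝ) (hM : M = polMat p (detPol d))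
    (rv : S → ℝ) (hrv : rv = polRew r (detPol d))
    (W : S → ℝ)
    (hW : W = fun s => pathVar M s T fun path =>
      (∑ t : Fin T, γ ^ (t : ℕ) * rv (path t.castSucc)) +
        γ ^ T * dval p r γ (detPol d) (path (Fin.last T))) :
    returnVar M rv γ = W + γ ^ (2 * T) • (M ^ T *ᵥ returnVar M rv γ) ∧
      ‖returnVar M rv γ‖ ≤ ‖W‖ / (1 - γ ^ (2 * T)) := by
  obtain ⟨hγ0, hγ1⟩ := hγ
  have hγ0' : (0:ℝ) ≤ γ := le_of_lt hγ0
  have h1γ : (0:ℝ) < 1 - γ := by linarith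
  -- M is a stochastic matrix
  have hMapp : ∀ s s', M s s' = p s (d s) s' := by
    intro s s'
    rw [hM]
    show ∑ a, detPol d s a * p s a s' = _
    simp [detPol, ite_mul, Finset.sum_ite_eq']
  have hrvapp : ∀ s, rv s = r s (d s) := by
    intro s
    rw [hrv]
    show ∑ a, detPol d s a * r s a = _
    simp [detPol, ite_mul, Finset.sum_ite_eq']
  have hM0 : ∀ s s', 0 ≤ M s s' := fun s s' => by rw [hMapp]; exact (hp s (d s)).1 s'
  have hM1 : ∀ s, ∑ s', M s s' = 1 := by
    intro s
    rw [Finset.sum_congr rfl (fun s' _ => hMapp s s')]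
    exact (hp s (d s)).2
  have hrvb : ∀ s, |rv s| ≤ 1 := by
    intro s
    rw [hrvapp, abs_le]
    exact ⟨by linarith [(hr s (d s)).1], (hr s (d s)).2⟩
  set v := dval p r γ (detPol d) with hv
  have hvres : v = resApply γ M rv := by rw [hv, dval, ← hM, ← hrv]
  have hbell0 : v = rv + γ • (M *ᵥ v) := by
    rw [hvres]
    exact resApply_bellman M hM0 hM1 hγ0' hγ1 1 zero_le_one hrvb
  have hbell : ∀ x, rv x = v x - γ * (M *ᵥ v) x := by
    intro x
    have := congrFun hbell0 x
    simp only [Pi.add_apply, Pi.smul_apply, smul_eq_mul] at this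
    linarith
  have hvb : ∀ s, |v s| ≤ 1/(1-γ) := by
    intro s
    rw [hvres]
    have := resApply_abs_le M hM0 hM1 hγ0' hγ1 1 zero_le_one hrvb s
    simpa using this
  have hMvb : ∀ s, |(M *ᵥ v) s| ≤ 1/(1-γ) := mulVec_abs_le M hM0 hM1 v _ hvb
  set u := oneStepVar M v with hu
  set Cu : ℝ := (2/(1-γ))^2 with hCu
  have hCu0 : 0 ≤ Cu := sq_nonneg _
  have hub : ∀ x, |u x| ≤ Cu := by
    intro x
    have hnn : 0 ≤ u x := Finset.sum_nonneg fun s' _ => mul_nonneg (hM0 x s') (sq_nonneg _)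
    rw [abs_of_nonneg hnn]
    calc u x ≤ ∑ s', M x s' * Cu := by
          apply Finset.sum_le_sum
          intro s' _
          apply mul_le_mul_of_nonneg_left _ (hM0 x s')
          rw [hCu]
          have h1 : |v s' - (M *ᵥ v) x| ≤ 2/(1-γ) := by
            calc |v s' - (M *ᵥ v) x| ≤ |v s'| + |(M *ᵥ v) x| := abs_sub _ _
              _ ≤ 1/(1-γ) + 1/(1-γ) := add_le_add (hvb s') (hMvb x)
              _ = 2/(1-γ) := by ring
          calc (v s' - (M *ᵥ v) x)^2 = |v s' - (M *ᵥ v) x|^2 := (sq_abs _).symm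
            _ ≤ (2/(1-γ))^2 := by
                apply pow_le_pow_left₀ (abs_nonneg _) h1
      _ = Cu := by rw [← Finset.sum_mul, hM1, one_mul]
  have haub : ∀ k s, |((M^k) *ᵥ u) s| ≤ Cu := fun k s =>
    pow_mulVec_abs_le M hM0 hM1 k u Cu hub s
  set a : ℕ → S → ℝ := fun k s => γ^(2*(k+1)) * ((M^k) *ᵥ u) s with ha
  have hγ2 : (0:ℝ) ≤ γ^2 := sq_nonneg γ
  have hγ2' : γ^2 < 1 := by nlinarith
  have hsa : ∀ s, Summable (fun k => a k s) := by
    intro s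
    apply Summable.of_norm
    apply Summable.of_nonneg_of_le (fun t => norm_nonneg _) (fun k => ?_)
      (((summable_geometric_of_lt_one hγ2 hγ2').mul_right (γ^2 * Cu)))
    rw [Real.norm_eq_abs, ha]
    simp only
    rw [abs_mul, abs_of_nonneg (pow_nonneg hγ0' _)]
    have h2 : γ^(2*(k+1)) = (γ^2)^k * γ^2 := by
      rw [← pow_mul, mul_comm (2:ℕ) (k+1)]
      ring
    rw [h2]
    calc (γ^2)^k * γ^2 * |((M^k) *ᵥ u) s| ≤ (γ^2)^k * γ^2 * Cu := by
          apply mul_le_mul_of_nonneg_left (haub k s)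
          positivity
      _ = (γ^2)^k * (γ^2 * Cu) := by ring
  set Varinf : S → ℝ := fun s => ∑' k, a k s with hVarinf
  -- W equals the partial sum
  have hWs : ∀ s, W s = ∑ k ∈ Finset.range T, a k s := by
    intro s
    rw [hW]
    exact pathVar_Y M hM1 hbell T s
  -- convergence of truncated-return variances
  have hgs : ∀ n : ℕ, (1-γ) * ∑ i ∈ Finset.range n, γ^i = 1 - γ^n := by
    intro n
    induction n with
    | zero => simp
    | succ m ih => rw [Finset.sum_range_succ, mul_add, ih, pow_succ]; ring
  have hgs' : ∀ n : ℕ, ∑ i ∈ Finset.range n, γ^i ≤ 1/(1-γ) := by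
    intro n
    rw [le_div_iff₀ h1γ]
    have := hgs n
    nlinarith [pow_nonneg hγ0' n]
  set C : ℝ := 2/(1-γ) with hC
  have hC0 : 0 ≤ C := by positivity
  set Z : (N : ℕ) → (Fin (N+1) → S) → ℝ := fun N q => ∑ t : Fin (N+1), γ^(t:ℕ) * rv (q t)
    with hZ
  have habsgeo : ∀ (N : ℕ) (q : Fin (N+1) → S) (g : Fin (N+1) → S),
      True := fun _ _ _ => trivial
  have hsum1 : ∀ (N : ℕ) (w : Fin N → S), |∑ i : Fin N, γ^(i:ℕ) * rv (w i)| ≤ 1/(1-γ) := by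
    intro N w
    calc |∑ i : Fin N, γ^(i:ℕ) * rv (w i)| ≤ ∑ i : Fin N, |γ^(i:ℕ) * rv (w i)| :=
          Finset.abs_sum_le_sum_abs _ _
      _ ≤ ∑ i : Fin N, γ^(i:ℕ) := by
          apply Finset.sum_le_sum
          intro t _
          rw [abs_mul, abs_of_nonneg (pow_nonneg hγ0' _)]
          calc γ^(t:ℕ) * |rv (w t)| ≤ γ^(t:ℕ) * 1 :=
                mul_le_mul_of_nonneg_left (hrvb _) (pow_nonneg hγ0' _)
            _ = γ^(t:ℕ) := mul_one _
      _ = ∑ i ∈ Finset.range N, γ^i := by rw [Fin.sum_univ_eq_sum_range]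
      _ ≤ 1/(1-γ) := hgs' N
  have hZb : ∀ (N : ℕ) (q : Fin (N+1) → S), |Z N q| ≤ C := by
    intro N q
    calc |Z N q| ≤ 1/(1-γ) := hsum1 (N+1) (fun i => q i)
      _ ≤ C := by rw [hC]; apply (div_le_div_iff_of_pos_right h1γ).mpr; norm_num
  have hYb : ∀ (N : ℕ) (q : Fin (N+1) → S), |Yfun γ rv v N q| ≤ C := by
    intro N q
    rw [Yfun]
    calc |(∑ i : Fin N, γ^(i:ℕ) * rv (q i.castSucc)) + γ^N * v (q (Fin.last N))|
        ≤ |∑ i : Fin N, γ^(i:ℕ) * rv (q i.castSucc)| + |γ^N * v (q (Fin.last N))| := abs_add_le _ _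
      _ ≤ 1/(1-γ) + 1/(1-γ) := by
          apply add_le_add (hsum1 N _)
          rw [abs_mul, abs_of_nonneg (pow_nonneg hγ0' _)]
          calc γ^N * |v (q (Fin.last N))| ≤ 1 * (1/(1-γ)) := by
                apply mul_le_mul (pow_le_one₀ hγ0' (le_of_lt hγ1)) (hvb _) (abs_nonneg _)
                  zero_le_one
            _ = 1/(1-γ) := one_mul _
      _ = C := by rw [hC]; ring
  have hdiff : ∀ (N : ℕ) (q : Fin (N+1) → S),
      |Z N q - Yfun γ rv v N q| ≤ (γ/(1-γ)) * γ^N := by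
    intro N q
    have he : Z N q - Yfun γ rv v N q
        = γ^N * (rv (q (Fin.last N)) - v (q (Fin.last N))) := by
      rw [hZ]
      simp only
      rw [Fin.sum_univ_castSucc (f := fun t : Fin (N+1) => γ^(t:ℕ) * rv (q t))]
      rw [Yfun]
      simp only [Fin.coe_castSucc, Fin.val_last]
      ring
    rw [he, hbell (q (Fin.last N))]
    have he2 : v (q (Fin.last N)) - γ * (M *ᵥ v) (q (Fin.last N)) - v (q (Fin.last N))
        = -(γ * (M *ᵥ v) (q (Fin.last N))) := by ring
    rw [he2, abs_mul, abs_neg, abs_mul, abs_of_nonneg (pow_nonneg hγ0' N),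
      abs_of_nonneg hγ0']
    calc γ^N * (γ * |(M *ᵥ v) (q (Fin.last N))|) ≤ γ^N * (γ * (1/(1-γ))) := by
          apply mul_le_mul_of_nonneg_left _ (pow_nonneg hγ0' N)
          exact mul_le_mul_of_nonneg_left (hMvb _) hγ0'
      _ = (γ/(1-γ)) * γ^N := by ring
  have hret : returnVar M rv γ = Varinf := by
    funext s
    have hDlim : Tendsto (fun N => pathVar M s N (Z N) - pathVar M s N (Yfun γ rv v N))
        atTop (nhds 0) := by
      apply squeeze_zero_norm (a := fun N => (4*C*(γ/(1-γ))) * γ^N)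
      · intro N
        rw [Real.norm_eq_abs]
        calc |pathVar M s N (Z N) - pathVar M s N (Yfun γ rv v N)|
            ≤ 4*C*((γ/(1-γ))*γ^N) :=
              pathVar_sub_le M hM0 hM1 s N (Z N) (Yfun γ rv v N) C ((γ/(1-γ)) * γ^N)
                (hZb N) (hYb N) (hdiff N)
          _ = (4*C*(γ/(1-γ)))*γ^N := by ring
      · have := (tendsto_pow_atTop_nhds_zero_of_lt_one hγ0' hγ1).const_mul (4*C*(γ/(1-γ)))
        simpa using this
    have hYlim : Tendsto (fun N => pathVar M s N (Yfun γ rv v N)) atTop (nhds (Varinf s)) := by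
      have heq : (fun N => pathVar M s N (Yfun γ rv v N))
          = fun N => ∑ k ∈ Finset.range N, a k s := by
        funext N
        exact pathVar_Y M hM1 hbell N s
      rw [heq, hVarinf]
      exact (hsa s).hasSum.tendsto_sum_nat
    have hZlim : Tendsto (fun N => pathVar M s N (Z N)) atTop (nhds (Varinf s)) := by
      have heq2 : (fun N => pathVar M s N (Z N))
          = fun N => pathVar M s N (Yfun γ rv v N)
            + (pathVar M s N (Z N) - pathVar M s N (Yfun γ rv v N)) := by
        funext N
        ring
      rw [heq2]
      simpa using hYlim.add hDlim
    exact hZlim.limUnder_eq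
  -- the multistep variance Bellman identity
  have hid : returnVar M rv γ = W + γ ^ (2 * T) • (M ^ T *ᵥ returnVar M rv γ) := by
    rw [hret]
    funext s
    have hsplit : (∑ k ∈ Finset.range T, a k s) + ∑' k, a (k+T) s = Varinf s :=
      (hsa s).sum_add_tsum_nat_add T
    have hterm : ∀ k, a (k+T) s = ∑ s', (M^T) s s' * (γ^(2*T) * a k s') := by
      intro k
      have hpow : (M:Matrix S S ℝ)^(k+T) = M^T * M^k := by rw [add_comm, pow_add]
      have hmv : ((M^(k+T)) *ᵥ u) s = ∑ s', (M^T) s s' * ((M^k) *ᵥ u) s' := by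
        rw [hpow, ← Matrix.mulVec_mulVec]
        simp [Matrix.mulVec, dotProduct]
      have hγp : γ^(2*(k+T+1)) = γ^(2*T) * γ^(2*(k+1)) := by
        rw [← pow_add]
        congr 1
        ring
      show γ^(2*(k+T+1)) * ((M^(k+T)) *ᵥ u) s = _
      rw [hγp, hmv, Finset.mul_sum]
      apply Finset.sum_congr rfl
      intro s' _
      show γ ^ (2 * T) * γ ^ (2 * (k + 1)) * ((M ^ T) s s' * ((M^k) *ᵥ u) s')
        = (M^T) s s' * (γ^(2*T) * (γ^(2*(k+1)) * ((M^k) *ᵥ u) s'))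
      ring
    have htail : ∑' k, a (k+T) s = γ^(2*T) * ((M^T) *ᵥ Varinf) s := by
      rw [tsum_congr hterm]
      rw [Summable.tsum_finsetSum (fun s' _ => ((hsa s').mul_left _).mul_left _)]
      have hinner : ∀ s', ∑' k, (M^T) s s' * (γ^(2*T) * a k s')
          = (M^T) s s' * γ^(2*T) * Varinf s' := by
        intro s'
        rw [tsum_mul_left, tsum_mul_left, mul_assoc]
      rw [Finset.sum_congr rfl (fun s' _ => hinner s')]
      have : ((M^T) *ᵥ Varinf) s = ∑ s', (M^T) s s' * Varinf s' := by
        simp [Matrix.mulVec, dotProduct]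
      rw [this, Finset.mul_sum]
      apply Finset.sum_congr rfl
      intro s' _
      ring
    have hVs : Varinf s = W s + γ^(2*T) * ((M^T) *ᵥ Varinf) s := by
      rw [← hsplit, htail, hWs s]
    rw [hVs]
    simp [Pi.add_apply, Pi.smul_apply, smul_eq_mul]
  refine ⟨hid, ?_⟩
  -- the norm bound
  set V : S → ℝ := returnVar M rv γ with hVdef
  have hVnb : ∀ s', |V s'| ≤ ‖V‖ := by
    intro s'
    rw [← Real.norm_eq_abs]
    exact norm_le_pi_norm V s'
  have hmb : ‖(M^T) *ᵥ V‖ ≤ ‖V‖ := by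
    rw [pi_norm_le_iff_of_nonneg (norm_nonneg V)]
    intro s
    rw [Real.norm_eq_abs]
    exact pow_mulVec_abs_le M hM0 hM1 T V ‖V‖ hVnb s
  have hVle : ‖V‖ ≤ ‖W‖ + γ^(2*T) * ‖V‖ := by
    calc ‖V‖ = ‖W + γ ^ (2 * T) • (M ^ T *ᵥ V)‖ := by rw [← hid]
      _ ≤ ‖W‖ + ‖γ ^ (2 * T) • (M ^ T *ᵥ V)‖ := norm_add_le _ _
      _ = ‖W‖ + γ^(2*T) * ‖(M^T) *ᵥ V‖ := by
          rw [norm_smul, Real.norm_eq_abs, abs_of_nonneg (pow_nonneg hγ0' _)]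
      _ ≤ ‖W‖ + γ^(2*T) * ‖V‖ := by
          have := mul_le_mul_of_nonneg_left hmb (pow_nonneg hγ0' (2*T))
          linarith
  have hlt : γ^(2*T) < 1 := pow_lt_one₀ hγ0' hγ1 (by omega)
  rw [le_div_iff₀ (by linarith)]
  nlinarith [norm_nonneg V]

end PaperMDP
end

section
/- In any finite MDP, for any stationary policy π, if states s and s' belong to the same closed irreducible recurrent class of the Markov chain with transition matrix P_π, then ρ*(s) = ρ*(s'), where ρ*(s) denotes the optimal gain starting from s. -/
open Filter Matrix MeasureTheory
open scoped BigOperators ENNReal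

namespace PaperMDP

variable {S A : Type*}

/-! ### Auxiliary development for Statement 12 -/

open scoped Topology

section Aux12

set_option linter.unusedSectionVars false
set_option maxHeartbeats 2000000

variable {S A : Type*} [Fintype S] [Fintype A] [DecidableEq S] [Nonempty S] [Nonempty A]

/-- stochastic matrix -/
def IsStoch (M : Matrix S S ℝ) : Prop := (∀ x y, 0 ≤ M x y) ∧ ∀ x, (∑ y, M x y) = 1

theorem polMat_stoch {p : S → A → S → ℝ} (hp : IsKernel p) {pol : S → A → ℝ}
    (hpol : IsPolicy pol) : IsStoch (polMat p pol) := by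
  constructor
  · intro x y
    exact Finset.sum_nonneg fun a _ => mul_nonneg ((hpol x).1 a) ((hp x a).1 y)
  · intro x
    have : (∑ y, polMat p pol x y) = ∑ a, pol x a * ∑ y, p x a y := by
      simp only [polMat, Matrix.of_apply, Finset.mul_sum]
      exact Finset.sum_comm
    rw [this]
    calc (∑ a, pol x a * ∑ y, p x a y) = ∑ a, pol x a * 1 := by
          simp only [fun a => (hp x a).2]
      _ = 1 := by simpa using (hpol x).2

theorem IsStoch.mul {M N : Matrix S S ℝ} (hM : IsStoch M) (hN : IsStoch N) :
    IsStoch (M * N) := by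
  constructor
  · intro x y
    rw [Matrix.mul_apply]
    exact Finset.sum_nonneg fun z _ => mul_nonneg (hM.1 x z) (hN.1 z y)
  · intro x
    simp only [Matrix.mul_apply]
    rw [Finset.sum_comm]
    calc (∑ z, ∑ y, M x z * N z y) = ∑ z, M x z * ∑ y, N z y := by simp [Finset.mul_sum]
      _ = 1 := by simp only [fun z => hN.2 z, mul_one]; exact hM.2 x

theorem IsStoch.pow {M : Matrix S S ℝ} (hM : IsStoch M) (t : ℕ) : IsStoch (M ^ t) := by
  induction t with
  | zero =>
    constructor
    · intro x y; simp [Matrix.one_apply]; positivity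
    · intro x; simp [Matrix.one_apply]
  | succ n ih => rw [pow_succ]; exact ih.mul hM

theorem IsStoch.mulVec_le {M : Matrix S S ℝ} (hM : IsStoch M) {v : S → ℝ} {C : ℝ}
    (h : ∀ x, v x ≤ C) (x : S) : (M *ᵥ v) x ≤ C := by
  calc (M *ᵥ v) x = ∑ y, M x y * v y := rfl
    _ ≤ ∑ y, M x y * C := Finset.sum_le_sum fun y _ => mul_le_mul_of_nonneg_left (h y) (hM.1 x y)
    _ = C := by rw [← Finset.sum_mul, hM.2 x, one_mul]

theorem IsStoch.mulVec_nonneg {M : Matrix S S ℝ} (hM : IsStoch M) {v : S → ℝ}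
    (h : ∀ x, 0 ≤ v x) (x : S) : 0 ≤ (M *ᵥ v) x :=
  Finset.sum_nonneg fun y _ => mul_nonneg (hM.1 x y) (h y)

theorem mulVec_mono {M : Matrix S S ℝ} (hM : ∀ x y, 0 ≤ M x y) {v w : S → ℝ}
    (h : ∀ x, v x ≤ w x) (x : S) : (M *ᵥ v) x ≤ (M *ᵥ w) x :=
  Finset.sum_le_sum fun y _ => mul_le_mul_of_nonneg_left (h y) (hM x y)

theorem IsStoch.abs_mulVec_le {M : Matrix S S ℝ} (hM : IsStoch M) {v : S → ℝ} {C : ℝ}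
    (h : ∀ x, |v x| ≤ C) (x : S) : |(M *ᵥ v) x| ≤ C := by
  rw [abs_le]
  constructor
  · have h1 := hM.mulVec_le (v := fun y => -v y) (C := C)
      (fun y => neg_le.mp ((abs_le.1 (h y)).1)) x
    have hneg : (M *ᵥ fun y => -v y) x = -(M *ᵥ v) x := by
      simp [Matrix.mulVec, dotProduct, mul_neg]
    rw [hneg] at h1
    linarith
  · exact hM.mulVec_le (fun y => (abs_le.1 (h y)).2) x

theorem polRew_mem {r : S → A → ℝ} (hr : ∀ s a, r s a ∈ Set.Icc (0:ℝ) 1) {pol : S → A → ℝ}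
    (hpol : IsPolicy pol) (x : S) : 0 ≤ polRew r pol x ∧ polRew r pol x ≤ 1 := by
  constructor
  · exact Finset.sum_nonneg fun a _ => mul_nonneg ((hpol x).1 a) (hr x a).1
  · calc (∑ a, pol x a * r x a) ≤ ∑ a, pol x a * 1 :=
        Finset.sum_le_sum fun a _ => mul_le_mul_of_nonneg_left (hr x a).2 ((hpol x).1 a)
    _ = 1 := by simpa using (hpol x).2

theorem mulVec_pow_fixed {M : Matrix S S ℝ} {g : S → ℝ} (hg : M *ᵥ g = g) (t : ℕ) :
    (M ^ t) *ᵥ g = g := by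
  induction t with
  | zero => simp
  | succ n ih => rw [pow_succ', ← Matrix.mulVec_mulVec, ih, hg]

theorem exists_decomp {M : Matrix S S ℝ}
    (habs : ∀ (u : S → ℝ) (x : S) (t : ℕ), |((M ^ t) *ᵥ u) x| ≤ ∑ y, |u y|)
    (v : S → ℝ) :
    ∃ g u : S → ℝ, M *ᵥ g = g ∧ v = g + u - M *ᵥ u := by
  classical
  set f : (S → ℝ) →ₗ[ℝ] (S → ℝ) := M.mulVecLin - LinearMap.id with hf
  have hfapp : ∀ u, f u = M *ᵥ u - u := fun u => rfl
  have hdisj : Disjoint (LinearMap.ker f) (LinearMap.range f) := by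
    rw [Submodule.disjoint_def]
    intro w hker hran
    obtain ⟨u, hu⟩ := hran
    have hwfix : M *ᵥ w = w := by
      have h := LinearMap.mem_ker.1 hker
      rw [hfapp] at h
      exact sub_eq_zero.mp h
    have hNw : ∀ N : ℕ, (N : ℝ) • w = (M ^ N) *ᵥ u - u := by
      intro N
      induction N with
      | zero => simp
      | succ n ih =>
        have hw' : (M ^ n) *ᵥ w = w := mulVec_pow_fixed hwfix n
        have hstep : w = (M ^ (n+1)) *ᵥ u - (M ^ n) *ᵥ u := by
          rw [← hw', ← hu, hfapp, Matrix.mulVec_sub, pow_succ, Matrix.mulVec_mulVec]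
        push_cast
        rw [add_smul, one_smul, ih]
        rw [hstep]
        abel
    have hbound : ∀ N : ℕ, ∀ x, (N : ℝ) * |w x| ≤ 2 * ∑ y, |u y| := by
      intro N x
      have h1 := habs u x N
      have h0 : |u x| ≤ ∑ y, |u y| := Finset.single_le_sum (f := fun y => |u y|)
        (fun y _ => abs_nonneg _) (Finset.mem_univ x)
      have h2 : (N : ℝ) * w x = ((M ^ N) *ᵥ u) x - u x := by
        have h3 := congrFun (hNw N) x
        simpa using h3
      calc (N : ℝ) * |w x| = |(N : ℝ) * w x| := by rw [abs_mul, Nat.abs_cast]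
        _ = |((M ^ N) *ᵥ u) x - u x| := by rw [h2]
        _ ≤ |((M ^ N) *ᵥ u) x| + |u x| := abs_sub _ _
        _ ≤ 2 * ∑ y, |u y| := by linarith
    funext x
    by_contra hx
    have hwx : 0 < |w x| := abs_pos.2 (by simpa using hx)
    obtain ⟨N, hN⟩ := exists_nat_gt ((2 * ∑ y, |u y|) / |w x|)
    have h4 := hbound N x
    have h5 : 2 * (∑ y, |u y|) < (N : ℝ) * |w x| := by
      rw [div_lt_iff₀ hwx] at hN
      linarith
    linarith
  have hrank := LinearMap.finrank_range_add_finrank_ker f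
  have hsupinf := Submodule.finrank_sup_add_finrank_inf_eq (LinearMap.ker f) (LinearMap.range f)
  have hinf : LinearMap.ker f ⊓ LinearMap.range f = ⊥ := disjoint_iff.1 hdisj
  have htop : LinearMap.ker f ⊔ LinearMap.range f = ⊤ := by
    apply Submodule.eq_top_of_finrank_eq
    rw [hinf] at hsupinf
    rw [finrank_bot, add_zero] at hsupinf
    omega
  have hv : v ∈ LinearMap.ker f ⊔ LinearMap.range f := htop ▸ Submodule.mem_top
  obtain ⟨g, hg, w, hw, hgw⟩ := Submodule.mem_sup.1 hv
  obtain ⟨u, hu⟩ := hw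
  refine ⟨g, -u, ?_, ?_⟩
  · have h := LinearMap.mem_ker.1 hg
    rw [hfapp] at h
    exact sub_eq_zero.mp h
  · rw [Matrix.mulVec_neg, ← hgw, ← hu, hfapp]
    abel



theorem ergodicAbel {M : Matrix S S ℝ} (hM : IsStoch M) (v : S → ℝ) {C : ℝ}
    (hv : ∀ x, 0 ≤ v x ∧ v x ≤ C) :
    ∃ g : S → ℝ, (∀ x, 0 ≤ g x ∧ g x ≤ C) ∧
      Tendsto (fun N : ℕ => (N:ℝ)⁻¹ • ∑ T ∈ Finset.range N, (M ^ T) *ᵥ v) atTop (𝓝 g) ∧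
      ∃ K : ℝ, 0 ≤ K ∧ ∀ γ : ℝ, 1/2 ≤ γ → γ < 1 → ∀ x,
        |(1-γ) * (∑' t : ℕ, γ^t * (((M ^ t) *ᵥ v) x)) - g x| ≤ K * (1-γ) := by
  classical
  have habs : ∀ (u : S → ℝ) (x : S) (t : ℕ), |((M ^ t) *ᵥ u) x| ≤ ∑ y, |u y| := by
    intro u x t
    exact (hM.pow t).abs_mulVec_le
      (fun z => Finset.single_le_sum (f := fun y => |u y|) (fun y _ => abs_nonneg _)
        (Finset.mem_univ z)) x
  obtain ⟨g, u, hgfix, hdec⟩ := exists_decomp habs v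
  set U : ℝ := ∑ y, |u y| with hU
  have hU0 : 0 ≤ U := Finset.sum_nonneg fun y _ => abs_nonneg _
  have huB : ∀ x, |u x| ≤ U := fun x =>
    Finset.single_le_sum (f := fun y => |u y|) (fun y _ => abs_nonneg _) (Finset.mem_univ x)
  have hMtu : ∀ t x, |((M ^ t) *ᵥ u) x| ≤ U := fun t x => habs u x t
  -- per-step identity
  have hPt : ∀ t : ℕ, (M ^ t) *ᵥ v = g + ((M ^ t) *ᵥ u) - ((M ^ (t+1)) *ᵥ u) := by
    intro t
    rw [hdec, Matrix.mulVec_sub, Matrix.mulVec_add, mulVec_pow_fixed hgfix,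
      pow_succ, ← Matrix.mulVec_mulVec]
  -- bounds on M^t v coordinates
  have hMtv : ∀ t x, 0 ≤ ((M ^ t) *ᵥ v) x ∧ ((M ^ t) *ᵥ v) x ≤ C := fun t x =>
    ⟨(hM.pow t).mulVec_nonneg (fun y => (hv y).1) x,
     (hM.pow t).mulVec_le (fun y => (hv y).2) x⟩
  -- Cesàro sums
  have hsum : ∀ N : ℕ, (∑ T ∈ Finset.range N, (M ^ T) *ᵥ v)
      = (N : ℝ) • g + (u - (M ^ N) *ᵥ u) := by
    intro N
    have htel : ∑ T ∈ Finset.range N, (((M ^ T) *ᵥ u) - ((M ^ (T+1)) *ᵥ u))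
        = (M ^ 0) *ᵥ u - (M ^ N) *ᵥ u := Finset.sum_range_sub' (fun t => (M ^ t) *ᵥ u) N
    calc (∑ T ∈ Finset.range N, (M ^ T) *ᵥ v)
        = ∑ T ∈ Finset.range N, (g + (((M ^ T) *ᵥ u) - ((M ^ (T+1)) *ᵥ u))) := by
          refine Finset.sum_congr rfl fun T _ => ?_
          rw [hPt T]; abel
      _ = (N : ℝ) • g + (u - (M ^ N) *ᵥ u) := by
          rw [Finset.sum_add_distrib, htel, Finset.sum_const, Finset.card_range]
          rw [← Nat.cast_smul_eq_nsmul ℝ]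
          simp [pow_zero, Matrix.one_mulVec]
  have hces : Tendsto (fun N : ℕ => (N:ℝ)⁻¹ • ∑ T ∈ Finset.range N, (M ^ T) *ᵥ v)
      atTop (𝓝 g) := by
    rw [tendsto_pi_nhds]
    intro x
    have hcoord : ∀ N : ℕ, 1 ≤ N →
        ‖((N:ℝ)⁻¹ • ∑ T ∈ Finset.range N, (M ^ T) *ᵥ v) x - g x‖ ≤ (2 * U) / N := by
      intro N hN
      have hNpos : (0:ℝ) < N := by exact_mod_cast hN
      have : ((N:ℝ)⁻¹ • ∑ T ∈ Finset.range N, (M ^ T) *ᵥ v) x - g x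
          = (N:ℝ)⁻¹ * (u x - ((M ^ N) *ᵥ u) x) := by
        rw [Pi.smul_apply, hsum N]
        simp only [Pi.add_apply, Pi.smul_apply, Pi.sub_apply, smul_eq_mul]
        field_simp
        ring
      rw [this]
      rw [norm_mul, Real.norm_eq_abs, Real.norm_eq_abs, abs_inv, Nat.abs_cast]
      rw [div_eq_inv_mul]
      refine mul_le_mul_of_nonneg_left ?_ (by positivity)
      calc |u x - ((M ^ N) *ᵥ u) x| ≤ |u x| + |((M ^ N) *ᵥ u) x| := abs_sub _ _
        _ ≤ 2 * U := by have := huB x; have := hMtu N x; linarith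
    have hlim : Tendsto (fun N : ℕ => (2 * U) / N) atTop (𝓝 0) :=
      tendsto_const_div_atTop_nhds_zero_nat (2 * U)
    have := squeeze_zero_norm' (f := fun N : ℕ =>
      ((N:ℝ)⁻¹ • ∑ T ∈ Finset.range N, (M ^ T) *ᵥ v) x - g x)
      (eventually_atTop.2 ⟨1, hcoord⟩) hlim
    have h2 : Tendsto (fun N : ℕ =>
        (((N:ℝ)⁻¹ • ∑ T ∈ Finset.range N, (M ^ T) *ᵥ v) x - g x) + g x) atTop (𝓝 (0 + g x)) :=
      this.add tendsto_const_nhds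
    simpa using h2
  have hgB : ∀ x, 0 ≤ g x ∧ g x ≤ C := by
    intro x
    have hx : Tendsto (fun N : ℕ => ((N:ℝ)⁻¹ • ∑ T ∈ Finset.range N, (M ^ T) *ᵥ v) x)
        atTop (𝓝 (g x)) := by
      have := hces
      rw [tendsto_pi_nhds] at this
      exact this x
    constructor
    · refine ge_of_tendsto hx (eventually_atTop.2 ⟨1, fun N hN => ?_⟩)
      rw [Pi.smul_apply, Finset.sum_apply, smul_eq_mul]
      have : (0:ℝ) ≤ (N:ℝ)⁻¹ := by positivity
      exact mul_nonneg this (Finset.sum_nonneg fun T _ => (hMtv T x).1)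
    · refine le_of_tendsto hx (eventually_atTop.2 ⟨1, fun N hN => ?_⟩)
      rw [Pi.smul_apply, Finset.sum_apply, smul_eq_mul]
      have hNpos : (0:ℝ) < N := by exact_mod_cast hN
      calc (N:ℝ)⁻¹ * ∑ T ∈ Finset.range N, ((M ^ T) *ᵥ v) x
          ≤ (N:ℝ)⁻¹ * ∑ T ∈ Finset.range N, C := by
            refine mul_le_mul_of_nonneg_left
              (Finset.sum_le_sum fun T _ => (hMtv T x).2) (by positivity)
        _ = C := by
            rw [Finset.sum_const, Finset.card_range, nsmul_eq_mul]
            field_simp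
  refine ⟨g, hgB, hces, 4 * U, by positivity, ?_⟩
  intro γ hγ2 hγ1 x
  have hγ0 : (0:ℝ) < γ := lt_of_lt_of_le (by norm_num) hγ2
  have hγnn : (0:ℝ) ≤ γ := le_of_lt hγ0
  have h1γ : 0 < 1 - γ := by linarith
  have habsγ : |γ| < 1 := by rw [abs_of_nonneg hγnn]; exact hγ1
  -- summability facts
  have hsummu : Summable (fun t : ℕ => γ ^ t * (((M ^ t) *ᵥ u) x)) := by
    refine Summable.of_norm_bounded (g := fun t : ℕ => γ ^ t * U) ?_ ?_
    · exact (summable_geometric_of_lt_one hγnn hγ1).mul_right U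
    · intro t
      rw [norm_mul, Real.norm_eq_abs, Real.norm_eq_abs, abs_pow, abs_of_nonneg hγnn]
      exact mul_le_mul_of_nonneg_left (hMtu t x) (by positivity)
  have hsummu' : Summable (fun t : ℕ => γ ^ t * (((M ^ (t+1)) *ᵥ u) x)) := by
    refine Summable.of_norm_bounded (g := fun t : ℕ => γ ^ t * U) ?_ ?_
    · exact (summable_geometric_of_lt_one hγnn hγ1).mul_right U
    · intro t
      rw [norm_mul, Real.norm_eq_abs, Real.norm_eq_abs, abs_pow, abs_of_nonneg hγnn]
      exact mul_le_mul_of_nonneg_left (hMtu (t+1) x) (by positivity)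
  have hsumg : Summable (fun t : ℕ => γ ^ t * g x) :=
    (summable_geometric_of_lt_one hγnn hγ1).mul_right (g x)
  set Wu : ℝ := ∑' t : ℕ, γ ^ t * (((M ^ t) *ᵥ u) x) with hWu
  have hnorm : ∀ t : ℕ, ‖γ ^ t * (((M ^ t) *ᵥ u) x)‖ ≤ γ ^ t * U := by
    intro t
    rw [norm_mul, Real.norm_eq_abs, Real.norm_eq_abs, abs_pow, abs_of_nonneg hγnn]
    exact mul_le_mul_of_nonneg_left (hMtu t x) (by positivity)
  have hWuB : |Wu| ≤ (1-γ)⁻¹ * U := by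
    have h2 : HasSum (fun t : ℕ => γ ^ t * U) ((1-γ)⁻¹ * U) := by
      have := ((summable_geometric_of_lt_one hγnn hγ1).hasSum).mul_right U
      rwa [tsum_geometric_of_lt_one hγnn hγ1] at this
    exact tsum_of_norm_bounded h2 hnorm
  have hshift : (∑' t : ℕ, γ ^ t * (((M ^ (t+1)) *ᵥ u) x)) = γ⁻¹ * (Wu - u x) := by
    have h0 : (fun t : ℕ => γ ^ t * (((M ^ (t+1)) *ᵥ u) x))
        = fun t : ℕ => γ⁻¹ * (γ ^ (t+1) * (((M ^ (t+1)) *ᵥ u) x)) := by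
      funext t
      rw [pow_succ]
      field_simp
      ring
    rw [h0, tsum_mul_left]
    congr 1
    have hzero := Summable.tsum_eq_zero_add hsummu
    have h00 : γ ^ 0 * (((M ^ 0) *ᵥ u) x) = u x := by simp [Matrix.one_mulVec]
    rw [h00] at hzero
    rw [← hWu] at hzero
    linarith [hzero]
  have hW : (∑' t : ℕ, γ ^ t * (((M ^ t) *ᵥ v) x))
      = (1-γ)⁻¹ * g x + Wu - γ⁻¹ * (Wu - u x) := by
    have hterm : ∀ t : ℕ, γ ^ t * (((M ^ t) *ᵥ v) x)
        = (γ ^ t * g x + γ ^ t * (((M ^ t) *ᵥ u) x)) - γ ^ t * (((M ^ (t+1)) *ᵥ u) x) := by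
      intro t
      rw [hPt t]
      simp only [Pi.add_apply, Pi.sub_apply]
      ring
    calc (∑' t : ℕ, γ ^ t * (((M ^ t) *ᵥ v) x))
        = ∑' t : ℕ, ((γ ^ t * g x + γ ^ t * (((M ^ t) *ᵥ u) x))
            - γ ^ t * (((M ^ (t+1)) *ᵥ u) x)) := tsum_congr hterm
      _ = (∑' t : ℕ, (γ ^ t * g x + γ ^ t * (((M ^ t) *ᵥ u) x)))
            - ∑' t : ℕ, γ ^ t * (((M ^ (t+1)) *ᵥ u) x) :=
          Summable.tsum_sub (hsumg.add hsummu) hsummu'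
      _ = ((∑' t : ℕ, γ ^ t * g x) + Wu) - γ⁻¹ * (Wu - u x) := by
          rw [Summable.tsum_add hsumg hsummu, hshift, ← hWu]
      _ = (1-γ)⁻¹ * g x + Wu - γ⁻¹ * (Wu - u x) := by
          rw [tsum_mul_right, tsum_geometric_of_lt_one hγnn hγ1]
  rw [hW]
  have hgx : (1-γ) * ((1-γ)⁻¹ * g x) = g x := by field_simp
  have hγne : γ ≠ 0 := ne_of_gt hγ0
  have h1γne : (1-γ) ≠ 0 := ne_of_gt h1γ
  have hexp : (1-γ) * ((1-γ)⁻¹ * g x + Wu - γ⁻¹ * (Wu - u x)) - g x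
      = (1-γ) * (Wu - γ⁻¹ * (Wu - u x)) := by
    field_simp
    ring
  rw [hexp]
  have hinvγ : γ⁻¹ ≤ 2 := by
    rw [inv_le_comm₀ hγ0 (by norm_num)]
    linarith
  calc |(1-γ) * (Wu - γ⁻¹ * (Wu - u x))|
      = (1-γ) * |Wu - γ⁻¹ * (Wu - u x)| := by
        rw [abs_mul, abs_of_nonneg (le_of_lt h1γ)]
    _ ≤ (1-γ) * (4 * U) := by
        refine mul_le_mul_of_nonneg_left ?_ (le_of_lt h1γ)
        have hsplit : Wu - γ⁻¹ * (Wu - u x) = (1 - γ⁻¹) * Wu + γ⁻¹ * u x := by ring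
        rw [hsplit]
        have h1a : 1 ≤ γ⁻¹ := (one_le_inv₀ hγ0).mpr hγ1.le
        have habs1 : |1 - γ⁻¹| = (1-γ)/γ := by
          rw [abs_of_nonpos (by linarith)]
          field_simp
          ring
        calc |(1 - γ⁻¹) * Wu + γ⁻¹ * u x|
            ≤ |(1 - γ⁻¹) * Wu| + |γ⁻¹ * u x| := abs_add_le _ _
          _ = ((1-γ)/γ) * |Wu| + γ⁻¹ * |u x| := by
              rw [abs_mul, abs_mul, habs1, abs_of_nonneg (inv_nonneg.2 hγnn)]
          _ ≤ ((1-γ)/γ) * ((1-γ)⁻¹ * U) + γ⁻¹ * U := by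
              refine add_le_add ?_ ?_
              · exact mul_le_mul_of_nonneg_left hWuB (by positivity)
              · exact mul_le_mul_of_nonneg_left (huB x) (by positivity)
          _ = γ⁻¹ * U + γ⁻¹ * U := by
              congr 1
              field_simp
          _ ≤ 4 * U := by nlinarith [hU0, hinvγ]
    _ = 4 * U * (1-γ) := by ring



section ResApply

variable {M : Matrix S S ℝ} {v : S → ℝ} {γ : ℝ}

theorem resApply_summable (hM : IsStoch M) {C : ℝ} (hv : ∀ x, |v x| ≤ C)
    (hγ0 : 0 ≤ γ) (hγ1 : γ < 1) :
    Summable (fun t : ℕ => γ ^ t • ((M ^ t) *ᵥ v) : ℕ → S → ℝ) := by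
  have hC : 0 ≤ C := le_trans (abs_nonneg _) (hv (Classical.arbitrary S))
  refine Summable.of_norm_bounded (g := fun t : ℕ => γ ^ t * C) ?_ ?_
  · exact (summable_geometric_of_lt_one hγ0 hγ1).mul_right C
  · intro t
    rw [norm_smul, Real.norm_eq_abs, abs_pow, abs_of_nonneg hγ0]
    refine mul_le_mul_of_nonneg_left ?_ (by positivity)
    rw [pi_norm_le_iff_of_nonneg hC]
    intro x
    rw [Real.norm_eq_abs]
    exact (hM.pow t).abs_mulVec_le hv x

theorem resApply_apply (hM : IsStoch M) {C : ℝ} (hv : ∀ x, |v x| ≤ C)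
    (hγ0 : 0 ≤ γ) (hγ1 : γ < 1) (x : S) :
    resApply γ M v x = ∑' t : ℕ, γ ^ t * (((M ^ t) *ᵥ v) x) := by
  rw [resApply, tsum_apply (resApply_summable hM hv hγ0 hγ1)]
  exact tsum_congr fun t => by simp

theorem resApply_coord_summable (hM : IsStoch M) {C : ℝ} (hv : ∀ x, |v x| ≤ C)
    (hγ0 : 0 ≤ γ) (hγ1 : γ < 1) (x : S) :
    Summable (fun t : ℕ => γ ^ t * (((M ^ t) *ᵥ v) x)) := by
  have hC : 0 ≤ C := le_trans (abs_nonneg _) (hv (Classical.arbitrary S))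
  refine Summable.of_norm_bounded (g := fun t : ℕ => γ ^ t * C) ?_ ?_
  · exact (summable_geometric_of_lt_one hγ0 hγ1).mul_right C
  · intro t
    rw [norm_mul, Real.norm_eq_abs, Real.norm_eq_abs, abs_pow, abs_of_nonneg hγ0]
    exact mul_le_mul_of_nonneg_left ((hM.pow t).abs_mulVec_le hv x) (by positivity)

/-- Bellman / Neumann identity for `resApply`. -/
theorem resApply_fixed (hM : IsStoch M) {C : ℝ} (hv : ∀ x, |v x| ≤ C)
    (hγ0 : 0 ≤ γ) (hγ1 : γ < 1) (x : S) :
    resApply γ M v x = v x + γ * ((M *ᵥ resApply γ M v) x) := by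
  have happ := resApply_apply hM hv hγ0 hγ1
  have hsumm := resApply_coord_summable hM hv hγ0 hγ1
  have hshift : (M *ᵥ resApply γ M v) x = ∑' t : ℕ, γ ^ t * (((M ^ (t+1)) *ᵥ v) x) := by
    calc (M *ᵥ resApply γ M v) x = ∑ y, M x y * resApply γ M v y := rfl
      _ = ∑ y, ∑' t : ℕ, M x y * (γ ^ t * (((M ^ t) *ᵥ v) y)) := by
          refine Finset.sum_congr rfl fun y _ => ?_
          rw [happ y, ← tsum_mul_left]
      _ = ∑' t : ℕ, ∑ y, M x y * (γ ^ t * (((M ^ t) *ᵥ v) y)) := by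
          rw [Summable.tsum_finsetSum]
          intro y _
          exact (hsumm y).mul_left (M x y)
      _ = ∑' t : ℕ, γ ^ t * (((M ^ (t+1)) *ᵥ v) x) := by
          refine tsum_congr fun t => ?_
          have : ((M ^ (t+1)) *ᵥ v) x = ∑ y, M x y * (((M ^ t) *ᵥ v) y) := by
            rw [pow_succ', ← Matrix.mulVec_mulVec]
            rfl
          rw [this, Finset.mul_sum]
          exact Finset.sum_congr rfl fun y _ => by ring
  rw [happ x, hshift]
  rw [Summable.tsum_eq_zero_add (hsumm x)]
  have h0 : γ ^ 0 * (((M ^ 0) *ᵥ v) x) = v x := by simp [Matrix.one_mulVec]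
  rw [h0, ← tsum_mul_left]
  congr 1
  exact tsum_congr fun t => by ring

theorem resApply_nonneg (hM : IsStoch M) {C : ℝ} (hv : ∀ x, |v x| ≤ C)
    (hvn : ∀ x, 0 ≤ v x) (hγ0 : 0 ≤ γ) (hγ1 : γ < 1) (x : S) :
    0 ≤ resApply γ M v x := by
  rw [resApply_apply hM hv hγ0 hγ1]
  exact tsum_nonneg fun t => mul_nonneg (by positivity)
    ((hM.pow t).mulVec_nonneg hvn x)

end ResApply


section Bellman

variable [DecidableEq A] {p : S → A → S → ℝ} {r : S → A → ℝ} {γ : ℝ}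

theorem detPol_isPolicy (d : S → A) : IsPolicy (detPol d) := by
  intro x
  constructor
  · intro a; unfold detPol; split <;> norm_num
  · simp [detPol]

theorem polRew_det (r : S → A → ℝ) (d : S → A) (x : S) :
    polRew r (detPol d) x = r x (d x) := by
  unfold polRew detPol
  rw [Finset.sum_congr rfl (fun a _ => ite_mul (a = d x) 1 0 (r x a))]
  simp

theorem polMat_det (p : S → A → S → ℝ) (d : S → A) (x y : S) :
    polMat p (detPol d) x y = p x (d x) y := by
  unfold polMat detPol
  simp only [Matrix.of_apply]
  rw [Finset.sum_congr rfl (fun a _ => ite_mul (a = d x) 1 0 (p x a y))]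
  simp

/-- the mixture identity: policy-evaluation operator as action average. -/
theorem weightedEval {q : S → A → ℝ} (hq : IsPolicy q) (v : S → ℝ) (x : S) :
    polRew r q x + γ * ((polMat p q *ᵥ v) x)
      = ∑ a, q x a * (r x a + γ * ∑ y, p x a y * v y) := by
  have h1 : (polMat p q *ᵥ v) x = ∑ a, q x a * ∑ y, p x a y * v y := by
    calc (polMat p q *ᵥ v) x = ∑ y, (∑ a, q x a * p x a y) * v y := rfl
      _ = ∑ y, ∑ a, q x a * (p x a y * v y) := by
          refine Finset.sum_congr rfl fun y _ => ?_
          rw [Finset.sum_mul]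
          exact Finset.sum_congr rfl fun a _ => by ring
      _ = ∑ a, ∑ y, q x a * (p x a y * v y) := Finset.sum_comm
      _ = ∑ a, q x a * ∑ y, p x a y * v y := by
          refine Finset.sum_congr rfl fun a _ => ?_
          rw [Finset.mul_sum]
  rw [h1, polRew]
  rw [Finset.mul_sum, ← Finset.sum_add_distrib]
  exact Finset.sum_congr rfl fun a _ => by ring

theorem bellman (hp : IsKernel p) (hr : ∀ s a, r s a ∈ Set.Icc (0:ℝ) 1)
    (hγ0 : 0 ≤ γ) (hγ1 : γ < 1) :
    ∃ d : S → A,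
      (∀ q, IsPolicy q → ∀ x, dval p r γ q x ≤ dval p r γ (detPol d) x) ∧
      (∀ q, IsPolicy q → ∀ x,
        polRew r q x + γ * ((polMat p q *ᵥ dval p r γ (detPol d)) x)
          ≤ dval p r γ (detPol d) x) := by
  classical
  set T : (S → ℝ) → (S → ℝ) := fun v x =>
    Finset.univ.sup' Finset.univ_nonempty (fun a => r x a + γ * ∑ y, p x a y * v y) with hT
  -- coordinate bounds for T
  have hTcoord : ∀ v w : S → ℝ, ∀ x, |T v x - T w x| ≤ γ * dist v w := by
    intro v w x
    have key : ∀ a : A, |(γ * ∑ y, p x a y * v y) - γ * ∑ y, p x a y * w y|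
        ≤ γ * dist v w := by
      intro a
      rw [← mul_sub, ← Finset.sum_sub_distrib, abs_mul, abs_of_nonneg hγ0]
      refine mul_le_mul_of_nonneg_left ?_ hγ0
      calc |∑ y, (p x a y * v y - p x a y * w y)|
          ≤ ∑ y, |p x a y * v y - p x a y * w y| := Finset.abs_sum_le_sum_abs _ _
        _ = ∑ y, p x a y * |v y - w y| := by
            refine Finset.sum_congr rfl fun y _ => ?_
            rw [← mul_sub, abs_mul, abs_of_nonneg ((hp x a).1 y)]
        _ ≤ ∑ y, p x a y * dist v w := by
            refine Finset.sum_le_sum fun y _ => ?_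
            refine mul_le_mul_of_nonneg_left ?_ ((hp x a).1 y)
            rw [← Real.dist_eq]
            exact dist_le_pi_dist v w y
        _ = dist v w := by rw [← Finset.sum_mul, (hp x a).2, one_mul]
    rw [abs_sub_le_iff]
    constructor
    · rw [sub_le_iff_le_add]
      refine Finset.sup'_le _ _ fun a _ => ?_
      have h2 : r x a + γ * ∑ y, p x a y * w y ≤ T w x :=
        Finset.le_sup' (f := fun a => r x a + γ * ∑ y, p x a y * w y) (Finset.mem_univ a)
      have h3 := (abs_le.1 (key a)).2
      linarith
    · rw [sub_le_iff_le_add]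
      refine Finset.sup'_le _ _ fun a _ => ?_
      have h2 : r x a + γ * ∑ y, p x a y * v y ≤ T v x :=
        Finset.le_sup' (f := fun a => r x a + γ * ∑ y, p x a y * v y) (Finset.mem_univ a)
      have h3 := (abs_le.1 (key a)).1
      linarith
  have hK1 : (⟨γ, hγ0⟩ : NNReal) < 1 := by exact_mod_cast hγ1
  have hLip : LipschitzWith ⟨γ, hγ0⟩ T := by
    refine LipschitzWith.of_dist_le_mul fun v w => ?_
    change dist (T v) (T w) ≤ γ * dist v w
    rw [dist_pi_le_iff (mul_nonneg hγ0 dist_nonneg)]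
    intro x
    rw [Real.dist_eq]
    exact hTcoord v w x
  have hcontr : ContractingWith ⟨γ, hγ0⟩ T := ⟨hK1, hLip⟩
  set V : S → ℝ := hcontr.fixedPoint T with hV
  have hfix : T V = V := hcontr.fixedPoint_isFixedPt
  -- monotonicity of T
  have hmono : ∀ v w : S → ℝ, (∀ x, v x ≤ w x) → ∀ x, T v x ≤ T w x := by
    intro v w hvw x
    refine Finset.sup'_le _ _ fun a _ => ?_
    have h2 : r x a + γ * ∑ y, p x a y * w y ≤ T w x :=
      Finset.le_sup' (f := fun a => r x a + γ * ∑ y, p x a y * w y) (Finset.mem_univ a)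
    have h3 : (∑ y, p x a y * v y) ≤ ∑ y, p x a y * w y :=
      Finset.sum_le_sum fun y _ => mul_le_mul_of_nonneg_left (hvw y) ((hp x a).1 y)
    nlinarith
  -- avg ≤ sup for any policy
  have havg : ∀ (q : S → A → ℝ), IsPolicy q → ∀ (v : S → ℝ) (x : S),
      polRew r q x + γ * ((polMat p q *ᵥ v) x) ≤ T v x := by
    intro q hq v x
    rw [weightedEval hq]
    calc (∑ a, q x a * (r x a + γ * ∑ y, p x a y * v y))
        ≤ ∑ a, q x a * T v x := by
          refine Finset.sum_le_sum fun a _ => ?_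
          refine mul_le_mul_of_nonneg_left ?_ ((hq x).1 a)
          exact Finset.le_sup' (f := fun a => r x a + γ * ∑ y, p x a y * v y)
            (Finset.mem_univ a)
      _ = T v x := by rw [← Finset.sum_mul, (hq x).2, one_mul]
  -- Neumann identity for dval
  have hdfix : ∀ (q : S → A → ℝ), IsPolicy q → ∀ x,
      dval p r γ q x = polRew r q x + γ * ((polMat p q *ᵥ dval p r γ q) x) := by
    intro q hq x
    exact resApply_fixed (polMat_stoch hp hq)
      (fun y => abs_le.2 ⟨by linarith [(polRew_mem hr hq y).1], (polRew_mem hr hq y).2⟩)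
      hγ0 hγ1 x
  -- dval q ≤ V
  have hdleV : ∀ (q : S → A → ℝ), IsPolicy q → ∀ x, dval p r γ q x ≤ V x := by
    intro q hq
    have hdT : ∀ x, dval p r γ q x ≤ T (dval p r γ q) x := by
      intro x
      rw [hdfix q hq x]
      exact havg q hq _ x
    have hiter : ∀ n : ℕ, ∀ x, dval p r γ q x ≤ T^[n] (dval p r γ q) x := by
      intro n
      induction n with
      | zero => intro x; simp
      | succ m ih =>
        intro x
        rw [Function.iterate_succ_apply']
        exact le_trans (hdT x) (hmono _ _ ih x)
    intro x
    have htend : Tendsto (fun n => T^[n] (dval p r γ q) x) atTop (𝓝 (V x)) := by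
      have h4 := hcontr.tendsto_iterate_fixedPoint (dval p r γ q)
      rw [tendsto_pi_nhds] at h4
      exact h4 x
    exact ge_of_tendsto htend (Eventually.of_forall fun n => hiter n x)
  -- greedy policy
  have hgreedy : ∀ x : S, ∃ a : A, T V x = r x a + γ * ∑ y, p x a y * V y := by
    intro x
    obtain ⟨a, _, ha⟩ := Finset.exists_mem_eq_sup' (Finset.univ_nonempty)
      (fun a : A => r x a + γ * ∑ y, p x a y * V y)
    exact ⟨a, ha⟩
  choose d hd using hgreedy
  have hDV : dval p r γ (detPol d) = V := by
    have hDfix : ∀ x, dval p r γ (detPol d) x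
        = r x (d x) + γ * ∑ y, p x (d x) y * dval p r γ (detPol d) y := by
      intro x
      rw [hdfix (detPol d) (detPol_isPolicy d) x, polRew_det]
      congr 1
      rw [mul_eq_mul_left_iff]
      left
      calc (polMat p (detPol d) *ᵥ dval p r γ (detPol d)) x
          = ∑ y, polMat p (detPol d) x y * dval p r γ (detPol d) y := rfl
        _ = ∑ y, p x (d x) y * dval p r γ (detPol d) y :=
            Finset.sum_congr rfl fun y _ => by rw [polMat_det]
    have hVfix : ∀ x, V x = r x (d x) + γ * ∑ y, p x (d x) y * V y := by
      intro x
      rw [← congrFun hfix x]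
      exact hd x
    -- contraction uniqueness
    have hdist : dist (dval p r γ (detPol d)) V ≤ γ * dist (dval p r γ (detPol d)) V := by
      rw [dist_pi_le_iff (mul_nonneg hγ0 dist_nonneg)]
      intro x
      rw [Real.dist_eq, hDfix x, hVfix x]
      have h5 : (∑ y, p x (d x) y * (dval p r γ (detPol d) y - V y))
          = (∑ y, p x (d x) y * dval p r γ (detPol d) y) - ∑ y, p x (d x) y * V y := by
        rw [← Finset.sum_sub_distrib]
        exact Finset.sum_congr rfl fun y _ => by ring
      have h6 : r x (d x) + γ * ∑ y, p x (d x) y * dval p r γ (detPol d) y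
          - (r x (d x) + γ * ∑ y, p x (d x) y * V y)
          = γ * ∑ y, p x (d x) y * (dval p r γ (detPol d) y - V y) := by
        rw [h5]; ring
      rw [h6, abs_mul, abs_of_nonneg hγ0]
      refine mul_le_mul_of_nonneg_left ?_ hγ0
      calc |∑ y, p x (d x) y * (dval p r γ (detPol d) y - V y)|
          ≤ ∑ y, |p x (d x) y * (dval p r γ (detPol d) y - V y)| :=
            Finset.abs_sum_le_sum_abs _ _
        _ = ∑ y, p x (d x) y * |dval p r γ (detPol d) y - V y| := by
            refine Finset.sum_congr rfl fun y _ => ?_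
            rw [abs_mul, abs_of_nonneg ((hp x (d x)).1 y)]
        _ ≤ ∑ y, p x (d x) y * dist (dval p r γ (detPol d)) V := by
            refine Finset.sum_le_sum fun y _ => ?_
            refine mul_le_mul_of_nonneg_left ?_ ((hp x (d x)).1 y)
            rw [← Real.dist_eq]
            exact dist_le_pi_dist _ _ y
        _ = dist (dval p r γ (detPol d)) V := by
            rw [← Finset.sum_mul, (hp x (d x)).2, one_mul]
    have hdist0 : dist (dval p r γ (detPol d)) V = 0 := by
      nlinarith [dist_nonneg (x := dval p r γ (detPol d)) (y := V)]
    exact eq_of_dist_eq_zero hdist0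
  refine ⟨d, ?_, ?_⟩
  · intro q hq x
    rw [hDV]
    exact hdleV q hq x
  · intro q hq x
    rw [hDV]
    exact le_of_le_of_eq (havg q hq V x) (congrFun hfix x)

end Bellman



theorem reaches_refl (M : Matrix S S ℝ) (s : S) : Reaches M s s :=
  ⟨0, by simp [Matrix.one_apply]⟩

theorem reaches_trans {M : Matrix S S ℝ} (hM : IsStoch M) {x y z : S}
    (h1 : Reaches M x y) (h2 : Reaches M y z) : Reaches M x z := by
  obtain ⟨a, ha⟩ := h1
  obtain ⟨b, hb⟩ := h2
  refine ⟨a + b, ?_⟩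
  rw [pow_add, Matrix.mul_apply]
  have hterm : 0 < (M ^ a) x y * (M ^ b) y z := mul_pos ha hb
  refine lt_of_lt_of_le hterm ?_
  refine Finset.single_le_sum (f := fun w => (M ^ a) x w * (M ^ b) w z) ?_ (Finset.mem_univ y)
  intro w _
  exact mul_nonneg ((hM.pow a).1 x w) ((hM.pow b).1 w z)

theorem reaches_step {M : Matrix S S ℝ} (hM : IsStoch M) {s x y : S}
    (h1 : Reaches M s x) (h2 : 0 < M x y) : Reaches M s y :=
  reaches_trans hM h1 ⟨1, by rwa [pow_one]⟩

noncomputable def psi (M : Matrix S S ℝ) (s' : S) : ℕ → S → ℝ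
  | 0 => fun x => if x = s' then 1 else 0
  | n+1 => fun x => if x = s' then 1 else (M *ᵥ psi M s' n) x

theorem psi_at (M : Matrix S S ℝ) (s' : S) (n : ℕ) : psi M s' n s' = 1 := by
  cases n <;> simp [psi]

theorem psi_zero_ne (M : Matrix S S ℝ) {s' x : S} (h : x ≠ s') : psi M s' 0 x = 0 := by
  simp [psi, h]

theorem psi_succ_ne (M : Matrix S S ℝ) {s' x : S} (h : x ≠ s') (n : ℕ) :
    psi M s' (n+1) x = (M *ᵥ psi M s' n) x := by
  simp [psi, h]

theorem psi_nonneg {M : Matrix S S ℝ} (hM : IsStoch M) (s' : S) :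
    ∀ n x, 0 ≤ psi M s' n x := by
  intro n
  induction n with
  | zero => intro x; by_cases h : x = s' <;> simp [psi, h]
  | succ m ih =>
    intro x
    by_cases h : x = s'
    · simp [psi, h]
    · rw [psi_succ_ne M h]
      exact hM.mulVec_nonneg ih x

theorem psi_le_one {M : Matrix S S ℝ} (hM : IsStoch M) (s' : S) :
    ∀ n x, psi M s' n x ≤ 1 := by
  intro n
  induction n with
  | zero => intro x; by_cases h : x = s' <;> simp [psi, h]
  | succ m ih =>
    intro x
    by_cases h : x = s'
    · simp [psi, h]
    · rw [psi_succ_ne M h]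
      exact hM.mulVec_le ih x

theorem psi_mono_succ {M : Matrix S S ℝ} (hM : IsStoch M) (s' : S) :
    ∀ n x, psi M s' n x ≤ psi M s' (n+1) x := by
  intro n
  induction n with
  | zero =>
    intro x
    by_cases h : x = s'
    · simp [psi, h]
    · rw [psi_zero_ne M h, psi_succ_ne M h]
      exact hM.mulVec_nonneg (psi_nonneg hM s' 0) x
  | succ m ih =>
    intro x
    by_cases h : x = s'
    · simp [psi, h]
    · rw [psi_succ_ne M h, psi_succ_ne M h]
      exact mulVec_mono hM.1 ih x

theorem psi_mono {M : Matrix S S ℝ} (hM : IsStoch M) (s' : S) {m n : ℕ} (h : m ≤ n) :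
    ∀ x, psi M s' m x ≤ psi M s' n x := by
  induction n with
  | zero => intro x; rw [Nat.le_zero.1 h]
  | succ k ih =>
    intro x
    rcases Nat.lt_or_ge m (k+1) with h1 | h1
    · exact le_trans (ih (Nat.lt_succ_iff.1 h1) x) (psi_mono_succ hM s' k x)
    · have : m = k + 1 := le_antisymm h h1
      rw [this]

theorem psi_ge_pow {M : Matrix S S ℝ} (hM : IsStoch M) (s' : S) :
    ∀ m n x, m ≤ n → (M ^ m) x s' ≤ psi M s' n x := by
  intro m
  induction m with
  | zero =>
    intro n x _
    by_cases h : x = s'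
    · rw [h, psi_at]; simp [Matrix.one_apply]
    · refine le_trans ?_ (psi_nonneg hM s' n x)
      simp [Matrix.one_apply, h]
  | succ k ih =>
    intro n x hn
    have hn' : k + 1 ≤ n := hn
    refine le_trans ?_ (psi_mono hM s' hn' x)
    by_cases h : x = s'
    · rw [h, psi_at]
      have := (hM.pow (k+1)).2 s'
      have hnn := fun y => (hM.pow (k+1)).1 s' y
      calc (M ^ (k+1)) s' s' ≤ ∑ y, (M ^ (k+1)) s' y :=
            Finset.single_le_sum (fun y _ => hnn y) (Finset.mem_univ s')
        _ = 1 := this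
    · rw [psi_succ_ne M h]
      calc (M ^ (k+1)) x s' = ∑ y, M x y * (M ^ k) y s' := by
            rw [pow_succ', Matrix.mul_apply]
        _ ≤ ∑ y, M x y * psi M s' k y :=
            Finset.sum_le_sum fun y _ =>
              mul_le_mul_of_nonneg_left (ih k y le_rfl) (hM.1 x y)
        _ = (M *ᵥ psi M s' k) x := rfl

/-- a.s. absorption: from a recurrent `s` that reaches `s'`, `psi → 1`. -/
theorem psi_hit {M : Matrix S S ℝ} (hM : IsStoch M) {s s' : S}
    (hrec : Recurrent M s) (hss' : Reaches M s s') :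
    ∀ ε : ℝ, 0 < ε → ∃ n : ℕ, 1 - ε ≤ psi M s' n s := by
  classical
  set Rf : Finset S := Finset.univ.filter (fun x => Reaches M s x) with hRf
  have hsRf : s ∈ Rf := by
    rw [hRf, Finset.mem_filter]
    exact ⟨Finset.mem_univ s, reaches_refl M s⟩
  have hmem : ∀ x, x ∈ Rf ↔ Reaches M s x := by
    intro x
    rw [hRf, Finset.mem_filter]
    simp
  have hRs' : ∀ x ∈ Rf, Reaches M x s' := by
    intro x hx
    exact reaches_trans hM (hrec x ((hmem x).1 hx)) hss'
  have hex : ∀ x : S, ∃ tx : ℕ, x ∈ Rf → 0 < (M ^ tx) x s' := by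
    intro x
    by_cases hx : x ∈ Rf
    · obtain ⟨tx, htx⟩ := hRs' x hx
      exact ⟨tx, fun _ => htx⟩
    · exact ⟨0, fun h => absurd h hx⟩
  choose t ht using hex
  set T : ℕ := Finset.univ.sup t with hT
  set δ : ℝ := Rf.inf' ⟨s, hsRf⟩ (fun x => (M ^ (t x)) x s') with hδ
  have hδpos : 0 < δ := by
    refine (Finset.lt_inf'_iff _).2 ?_
    intro x hx
    exact ht x hx
  have hδpsi : ∀ x ∈ Rf, δ ≤ psi M s' T x := by
    intro x hx
    refine le_trans (Finset.inf'_le _ hx) ?_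
    exact psi_ge_pow hM s' (t x) T x (Finset.le_sup (Finset.mem_univ x))
  have hδ1 : δ ≤ 1 := le_trans (hδpsi s hsRf) (psi_le_one hM s' T s)
  have hclosed : ∀ x ∈ Rf, ∀ y, 0 < M x y → y ∈ Rf := by
    intro x hx y hxy
    exact (hmem y).2 (reaches_step hM ((hmem x).1 hx) hxy)
  -- the contraction step
  have hstep : ∀ (n : ℕ) (c : ℝ), 0 ≤ c → (∀ y ∈ Rf, 1 - psi M s' n y ≤ c) →
      ∀ m, ∀ x ∈ Rf, 1 - psi M s' (n + m) x ≤ c * (1 - psi M s' m x) := by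
    intro n c hc hcn m
    induction m with
    | zero =>
      intro x hx
      by_cases h : x = s'
      · rw [h, psi_at, psi_at]; simp
      · rw [psi_zero_ne M h, Nat.add_zero]
        simpa using hcn x hx
    | succ m ih =>
      intro x hx
      by_cases h : x = s'
      · rw [h, psi_at, psi_at]
        simp [mul_nonneg hc]
      · rw [show n + (m+1) = (n + m) + 1 by ring, psi_succ_ne M h, psi_succ_ne M h]
        have hrow := hM.2 x
        have hexp : 1 - (M *ᵥ psi M s' (n+m)) x
            = ∑ y, M x y * (1 - psi M s' (n+m) y) := by
          have : (∑ y, M x y * (1 - psi M s' (n+m) y))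
              = (∑ y, M x y) - ∑ y, M x y * psi M s' (n+m) y := by
            rw [← Finset.sum_sub_distrib]
            exact Finset.sum_congr rfl fun y _ => by ring
          rw [this, hrow]
          rfl
        have hexp2 : c * (1 - (M *ᵥ psi M s' m) x)
            = ∑ y, M x y * (c * (1 - psi M s' m y)) := by
          have h8 : ∀ y, M x y * (c * (1 - psi M s' m y))
              = c * (M x y - M x y * psi M s' m y) := fun y => by ring
          rw [Finset.sum_congr rfl (fun y _ => h8 y), ← Finset.mul_sum,
            Finset.sum_sub_distrib, hrow]
          rfl
        rw [hexp, hexp2]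
        refine Finset.sum_le_sum fun y _ => ?_
        rcases lt_or_eq_of_le (hM.1 x y) with hpos | hzero
        · exact mul_le_mul_of_nonneg_left (ih y (hclosed x hx y hpos)) (le_of_lt hpos)
        · rw [← hzero]; simp
  -- geometric decay
  have hiter : ∀ k : ℕ, ∀ x ∈ Rf, 1 - psi M s' (k * T) x ≤ (1 - δ)^k := by
    intro k
    induction k with
    | zero =>
      intro x hx
      have h0 := psi_nonneg hM s' (0 * T) x
      simp only [pow_zero]
      linarith
    | succ k ih =>
      intro x hx
      have h1δ : (0:ℝ) ≤ (1 - δ)^k := pow_nonneg (by linarith) k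
      have := hstep (k * T) ((1-δ)^k) h1δ ih T x hx
      rw [show (k+1) * T = k * T + T by ring]
      calc 1 - psi M s' (k * T + T) x ≤ (1-δ)^k * (1 - psi M s' T x) := this
        _ ≤ (1-δ)^k * (1 - δ) := by
            refine mul_le_mul_of_nonneg_left ?_ h1δ
            linarith [hδpsi x hx]
        _ = (1-δ)^(k+1) := by rw [pow_succ]
  intro ε hε
  obtain ⟨k, hk⟩ := exists_pow_lt_of_lt_one hε (show 1 - δ < 1 by linarith)
  refine ⟨k * T, ?_⟩
  have := hiter k s hsRf
  linarith

/-- superharmonic propagation along `psi`. -/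
theorem psi_superharmonic {M : Matrix S S ℝ} (hM : IsStoch M) {V : S → ℝ} {γ : ℝ}
    (hV0 : ∀ x, 0 ≤ V x) (hsup : ∀ x, γ * ((M *ᵥ V) x) ≤ V x)
    (hγ0 : 0 ≤ γ) (hγ1 : γ ≤ 1) (s' : S) :
    ∀ n x, γ^n * psi M s' n x * V s' ≤ V x := by
  intro n
  induction n with
  | zero =>
    intro x
    by_cases h : x = s'
    · rw [h, psi_at]; simp
    · rw [psi_zero_ne M h]; simpa using hV0 x
  | succ n ih =>
    intro x
    by_cases h : x = s'
    · rw [h, psi_at, mul_one]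
      have hp1 : γ^(n+1) ≤ 1 := pow_le_one₀ hγ0 hγ1
      nlinarith [hV0 s']
    · rw [psi_succ_ne M h]
      have hkey : γ^(n+1) * ((M *ᵥ psi M s' n) x) * V s'
          = γ * ((M *ᵥ (fun y => γ^n * psi M s' n y * V s')) x) := by
        have : (M *ᵥ (fun y => γ^n * psi M s' n y * V s')) x
            = γ^n * ((M *ᵥ psi M s' n) x) * V s' := by
          calc (M *ᵥ (fun y => γ^n * psi M s' n y * V s')) x
              = ∑ y, M x y * (γ^n * psi M s' n y * V s') := rfl
            _ = γ^n * (∑ y, M x y * psi M s' n y) * V s' := by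
                rw [Finset.mul_sum, Finset.sum_mul]
                exact Finset.sum_congr rfl fun y _ => by ring
            _ = γ^n * ((M *ᵥ psi M s' n) x) * V s' := rfl
        rw [this, pow_succ]
        ring
      rw [hkey]
      refine le_trans ?_ (hsup x)
      refine mul_le_mul_of_nonneg_left ?_ hγ0
      exact mulVec_mono hM.1 (fun y => ih y) x




/-! ### sequence of discounts, pigeonhole, limit helpers -/

noncomputable def Γseq (k : ℕ) : ℝ := 1 - ((k:ℝ)+2)⁻¹

theorem Γseq_one_sub (k : ℕ) : 1 - Γseq k = ((k:ℝ)+2)⁻¹ := by simp [Γseq]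

theorem Γseq_half (k : ℕ) : 1/2 ≤ Γseq k := by
  have hk0 : (0:ℝ) ≤ (k:ℝ) := Nat.cast_nonneg k
  have h2 : (2:ℝ) ≤ (k:ℝ) + 2 := by linarith
  have := inv_anti₀ (by norm_num : (0:ℝ) < 2) h2
  rw [Γseq]
  norm_num at this ⊢
  linarith

theorem Γseq_nonneg (k : ℕ) : 0 ≤ Γseq k := le_trans (by norm_num) (Γseq_half k)

theorem Γseq_lt_one (k : ℕ) : Γseq k < 1 := by
  have : (0:ℝ) < ((k:ℝ)+2)⁻¹ := by positivity
  rw [Γseq]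
  linarith

theorem Γseq_inv_tendsto : Filter.Tendsto (fun k : ℕ => ((k:ℝ)+2)⁻¹) atTop (𝓝 0) := by
  have h1 : Filter.Tendsto (fun k : ℕ => (k:ℝ) + 2) atTop atTop :=
    tendsto_atTop_add_const_right atTop 2 tendsto_natCast_atTop_atTop
  exact h1.inv_tendsto_atTop

theorem Γseq_tendsto : Filter.Tendsto Γseq atTop (𝓝 1) := by
  have h := Filter.Tendsto.sub
    (tendsto_const_nhds : Filter.Tendsto (fun _ : ℕ => (1:ℝ)) atTop (𝓝 1)) Γseq_inv_tendsto
  simp only [sub_zero] at h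
  exact h

theorem le_of_freq {f g : ℕ → ℝ} {a b : ℝ} (hf : Filter.Tendsto f atTop (𝓝 a))
    (hg : Filter.Tendsto g atTop (𝓝 b)) (h : ∃ᶠ k in atTop, f k ≤ g k) : a ≤ b := by
  by_contra hab
  push_neg at hab
  have h2 : ∀ᶠ k in atTop, g k - f k < 0 :=
    (hg.sub hf).eventually_lt_const (by linarith)
  obtain ⟨k, hk1, hk2⟩ := (h.and_eventually h2).exists
  linarith

theorem exists_freq_eq {β : Type*} [Finite β] (f : ℕ → β) : ∃ b, ∃ᶠ k in atTop, f k = b := by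
  by_contra h
  push_neg at h
  have h1 : ∀ b : β, ∀ᶠ k in atTop, f k ≠ b := by
    intro b
    have := h b
    exact this
  have h2 : ∀ᶠ k in atTop, ∀ b : β, f k ≠ b := Filter.eventually_all.2 h1
  obtain ⟨k, hk⟩ := h2.exists
  exact hk (f k) rfl

/-! ### gain: Cesàro convergence and Abelian theorem -/

theorem gain_spec {p : S → A → S → ℝ} (hp : IsKernel p)
    {r : S → A → ℝ} (hr : ∀ s a, r s a ∈ Set.Icc (0:ℝ) 1)
    {q : S → A → ℝ} (hq : IsPolicy q) :
    (∀ x, 0 ≤ gain p r q x ∧ gain p r q x ≤ 1) ∧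
    ∃ K : ℝ, 0 ≤ K ∧ ∀ γ : ℝ, 1/2 ≤ γ → γ < 1 → ∀ x,
      |(1 - γ) * dval p r γ q x - gain p r q x| ≤ K * (1 - γ) := by
  have hM : IsStoch (polMat p q) := polMat_stoch hp hq
  have hv : ∀ x, 0 ≤ polRew r q x ∧ polRew r q x ≤ 1 := fun x => polRew_mem hr hq x
  obtain ⟨g, hgB, hces, K, hK0, hKb⟩ := ergodicAbel hM (polRew r q) hv
  have hgain : gain p r q = g := by
    have h0 : gain p r q = limUnder atTop (fun N : ℕ =>
        (N:ℝ)⁻¹ • ∑ T ∈ Finset.range N, (polMat p q ^ T) *ᵥ polRew r q) := rfl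
    rw [h0]
    exact hces.limUnder_eq
  rw [hgain]
  refine ⟨hgB, K, hK0, ?_⟩
  intro γ h2 h1 x
  have habs : ∀ y, |polRew r q y| ≤ 1 := fun y => abs_le.2 ⟨by linarith [(hv y).1], (hv y).2⟩
  have hKx := hKb γ h2 h1 x
  have hdv : dval p r γ q x = ∑' t : ℕ, γ^t * (((polMat p q ^ t) *ᵥ polRew r q) x) :=
    resApply_apply hM habs (by linarith) h1 x
  rw [hdv]
  exact hKx

theorem gain_abel_seq {p : S → A → S → ℝ} (hp : IsKernel p)
    {r : S → A → ℝ} (hr : ∀ s a, r s a ∈ Set.Icc (0:ℝ) 1)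
    {q : S → A → ℝ} (hq : IsPolicy q) (x : S) :
    Filter.Tendsto (fun k : ℕ => (1 - Γseq k) * dval p r (Γseq k) q x) atTop
      (𝓝 (gain p r q x)) := by
  obtain ⟨hB, K, hK0, hKb⟩ := gain_spec hp hr hq
  have hbound : ∀ k : ℕ, ‖(1 - Γseq k) * dval p r (Γseq k) q x - gain p r q x‖
      ≤ K * ((k:ℝ)+2)⁻¹ := by
    intro k
    rw [Real.norm_eq_abs, ← Γseq_one_sub k]
    exact hKb (Γseq k) (Γseq_half k) (Γseq_lt_one k) x
  have hlim0 : Filter.Tendsto (fun k : ℕ => K * ((k:ℝ)+2)⁻¹) atTop (𝓝 0) := by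
    have := Γseq_inv_tendsto.const_mul K
    simpa using this
  have hz := squeeze_zero_norm hbound hlim0
  have h2 : Filter.Tendsto (fun k : ℕ =>
      ((1 - Γseq k) * dval p r (Γseq k) q x - gain p r q x) + gain p r q x) atTop
      (𝓝 (0 + gain p r q x)) := hz.add tendsto_const_nhds
  simpa using h2

/-! ### one-sided comparison of optimal gains -/

theorem gainStar_one_sided [DecidableEq A] {p : S → A → S → ℝ} (hp : IsKernel p)
    {r : S → A → ℝ} (hr : ∀ s a, r s a ∈ Set.Icc (0:ℝ) 1)
    {pol : S → A → ℝ} (hpol : IsPolicy pol) {s s' : S}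
    (hrec : Recurrent (polMat p pol) s) (hss' : Reaches (polMat p pol) s s') :
    gainStar p r s' ≤ gainStar p r s := by
  classical
  have hM : IsStoch (polMat p pol) := polMat_stoch hp hpol
  haveI : Nonempty {q : S → A → ℝ // IsPolicy q} := ⟨⟨pol, hpol⟩⟩
  have hBdd : BddAbove (Set.range fun q : {q : S → A → ℝ // IsPolicy q} => gain p r q.1 s) := by
    refine ⟨1, ?_⟩
    rintro y ⟨⟨q, hq⟩, rfl⟩
    exact ((gain_spec hp hr hq).1 s).2
  have key : ∀ (q : S → A → ℝ), IsPolicy q → gain p r q s' ≤ gainStar p r s := by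
    intro q hq
    have hstep : ∀ ε : ℝ, 0 < ε → (1 - ε) * gain p r q s' ≤ gainStar p r s := by
      intro ε hε
      obtain ⟨n, hn⟩ := psi_hit hM hrec hss' ε hε
      have hbell : ∀ k : ℕ, ∃ d : S → A,
          (∀ w, IsPolicy w → ∀ x, dval p r (Γseq k) w x ≤ dval p r (Γseq k) (detPol d) x) ∧
          (∀ w, IsPolicy w → ∀ x,
            polRew r w x + Γseq k * ((polMat p w *ᵥ dval p r (Γseq k) (detPol d)) x)
              ≤ dval p r (Γseq k) (detPol d) x) :=
        fun k => bellman hp hr (Γseq_nonneg k) (Γseq_lt_one k)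
      choose D hD1 hD2 using hbell
      obtain ⟨d, hd⟩ := exists_freq_eq D
      have hA : Filter.Tendsto (fun k : ℕ => (1 - Γseq k) * dval p r (Γseq k) (detPol d) s)
          atTop (𝓝 (gain p r (detPol d) s)) := gain_abel_seq hp hr (detPol_isPolicy d) s
      have hBq : Filter.Tendsto (fun k : ℕ => (1 - Γseq k) * dval p r (Γseq k) q s')
          atTop (𝓝 (gain p r q s')) := gain_abel_seq hp hr hq s'
      have hPow : Filter.Tendsto (fun k : ℕ => (Γseq k)^n * psi (polMat p pol) s' n s) atTop
          (𝓝 (psi (polMat p pol) s' n s)) := by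
        have h3 := (Γseq_tendsto.pow n).mul_const (psi (polMat p pol) s' n s)
        simpa using h3
      have hb : Filter.Tendsto (fun k : ℕ => ((Γseq k)^n * psi (polMat p pol) s' n s)
          * ((1 - Γseq k) * dval p r (Γseq k) q s')) atTop
          (𝓝 (psi (polMat p pol) s' n s * gain p r q s')) := by
        have h4 := hPow.mul hBq
        simpa using h4
      have hfreq : ∃ᶠ k in atTop, ((Γseq k)^n * psi (polMat p pol) s' n s)
          * ((1 - Γseq k) * dval p r (Γseq k) q s')
          ≤ (1 - Γseq k) * dval p r (Γseq k) (detPol d) s := by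
        refine hd.mono fun k hk => ?_
        rw [← hk]
        have habs : ∀ y, |polRew r (detPol (D k)) y| ≤ 1 := fun y =>
          abs_le.2 ⟨by linarith [(polRew_mem hr (detPol_isPolicy (D k)) y).1],
            (polRew_mem hr (detPol_isPolicy (D k)) y).2⟩
        have hV0 : ∀ x, 0 ≤ dval p r (Γseq k) (detPol (D k)) x := fun x =>
          resApply_nonneg (polMat_stoch hp (detPol_isPolicy (D k))) habs
            (fun y => (polRew_mem hr (detPol_isPolicy (D k)) y).1)
            (Γseq_nonneg k) (Γseq_lt_one k) x
        have hsup : ∀ x, Γseq k * ((polMat p pol *ᵥ dval p r (Γseq k) (detPol (D k))) x)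
            ≤ dval p r (Γseq k) (detPol (D k)) x := by
          intro x
          have h7 := hD2 k pol hpol x
          have h8 : 0 ≤ polRew r pol x := (polRew_mem hr hpol x).1
          linarith
        have hpsi := psi_superharmonic hM hV0 hsup (Γseq_nonneg k)
          (le_of_lt (Γseq_lt_one k)) s' n s
        have hq' : dval p r (Γseq k) q s' ≤ dval p r (Γseq k) (detPol (D k)) s' :=
          hD1 k q hq s'
        have h1γ : (0:ℝ) ≤ 1 - Γseq k := by linarith [Γseq_lt_one k]
        have hc : 0 ≤ (Γseq k)^n * psi (polMat p pol) s' n s :=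
          mul_nonneg (pow_nonneg (Γseq_nonneg k) n) (psi_nonneg hM s' n s)
        have e1 : ((Γseq k)^n * psi (polMat p pol) s' n s) * dval p r (Γseq k) q s'
            ≤ ((Γseq k)^n * psi (polMat p pol) s' n s) * dval p r (Γseq k) (detPol (D k)) s' :=
          mul_le_mul_of_nonneg_left hq' hc
        have e3 : ((Γseq k)^n * psi (polMat p pol) s' n s) * dval p r (Γseq k) q s'
            ≤ dval p r (Γseq k) (detPol (D k)) s := le_trans e1 hpsi
        calc ((Γseq k)^n * psi (polMat p pol) s' n s) * ((1 - Γseq k) * dval p r (Γseq k) q s')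
            = (1 - Γseq k) * (((Γseq k)^n * psi (polMat p pol) s' n s)
                * dval p r (Γseq k) q s') := by ring
          _ ≤ (1 - Γseq k) * dval p r (Γseq k) (detPol (D k)) s :=
              mul_le_mul_of_nonneg_left e3 h1γ
      have hmain : psi (polMat p pol) s' n s * gain p r q s' ≤ gain p r (detPol d) s :=
        le_of_freq hb hA hfreq
      have hstar : gain p r (detPol d) s ≤ gainStar p r s :=
        le_ciSup hBdd ⟨detPol d, detPol_isPolicy d⟩
      have hg0 : 0 ≤ gain p r q s' := ((gain_spec hp hr hq).1 s').1
      have h9 : (1-ε) * gain p r q s' ≤ psi (polMat p pol) s' n s * gain p r q s' :=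
        mul_le_mul_of_nonneg_right (by linarith) hg0
      linarith
    have htend : Filter.Tendsto (fun m : ℕ => (1 - ((m:ℝ)+2)⁻¹) * gain p r q s') atTop
        (𝓝 (gain p r q s')) := by
      have h5 := Γseq_tendsto.mul_const (gain p r q s')
      simpa [Γseq] using h5
    exact le_of_tendsto htend (Filter.Eventually.of_forall fun m =>
      hstep (((m:ℝ)+2)⁻¹) (by positivity))
  exact ciSup_le fun q => key q.1 q.2


end Aux12

/-- In any finite MDP, if `s, s'` belong to the same closed irreducible
recurrent class of the Markov chain `P_π` induced by a stationary policy `π` (i.e. both are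
recurrent and they communicate), then `ρ^*(s) = ρ^*(s')`. -/
theorem stmt12 {S A : Type*} [Fintype S] [Fintype A] [DecidableEq S] [DecidableEq A]
    [Nonempty S] [Nonempty A]
    (p : S → A → S → ℝ) (hp : IsKernel p)
    (r : S → A → ℝ) (hr : ∀ s a, r s a ∈ Set.Icc (0 : ℝ) 1)
    (pol : S → A → ℝ) (hpol : IsPolicy pol)
    (s s' : S)
    (hrec : Recurrent (polMat p pol) s) (hrec' : Recurrent (polMat p pol) s')
    (hss' : Reaches (polMat p pol) s s') (hs's : Reaches (polMat p pol) s' s) :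
    gainStar p r s = gainStar p r s' := by
  exact le_antisymm
    (gainStar_one_sided hp hr hpol hrec' hs's)
    (gainStar_one_sided hp hr hpol hrec hss')


end PaperMDP
end
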